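/- arXiv:1107.1749 — 9 statements merged into one kernel-verified Lean document; each statement's English description precedes it below -/
import Mathlib

section
/- The Hausdorff dimension of A_1 equals 0. -/
open Filter MeasureTheory Real Set

noncomputable section

/-- `Σ₂ = {0,1}^ℕ`: the space of 0-1 sequences `(x_k)_{k ≥ 1}`, where the entry `x_k`
(for `k ≥ 1`) is represented by `x (k-1) : Bool`. -/
abbrev Sigma2 : Type := ℕ → Bool

/-- The metric `ρ((x_k),(y_k)) = 2^{-min{n : x_n ≠ y_n}}` (up to the indexing convention
`dist x y = (1/2)^{first index where x,y differ}`). -/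
noncomputable instance : MetricSpace Sigma2 :=
  PiNat.metricSpaceOfDiscreteUniformity fun _ => rfl

/-- The digit `x_k ∈ {0,1}` (for `k ≥ 1`) of a sequence, as a real number. -/
def xval (x : Sigma2) (k : ℕ) : ℝ := if x (k - 1) then 1 else 0

/-- `A_θ = {(x_k) ∈ Σ₂ : lim_{n→∞} (1/n) ∑_{k=1}^n x_k x_{2k} = θ}`. -/
def Aset (θ : ℝ) : Set Sigma2 :=
  {x | Tendsto (fun n : ℕ => (∑ k ∈ Finset.Icc 1 n, xval x k * xval x (2 * k)) / (n : ℝ))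
    atTop (nhds θ)}

/-- The cylinder set `[u]` of sequences starting with the finite word `u`
(a list `u` represents the word `u_1 … u_n` with `u_k = u.getD (k-1) false`). -/
def cylinder (u : List Bool) : Set Sigma2 :=
  {x | ∀ i < u.length, x i = u.getD i false}

/-- Initial distribution: `π(0) = 1 - p`, `π(1) = p`. -/
def initProb (p : ℝ) (b : Bool) : ℝ := if b then p else 1 - p

/-- Transition probabilities: `P(0,0) = 1-p`, `P(0,1) = p`, `P(1,0) = q`, `P(1,1) = 1-q`. -/
def transProb (p q : ℝ) (a b : Bool) : ℝ :=
  if a then (if b then 1 - q else q) else (if b then p else 1 - p)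

/-- Markov weight `μ[w] = π(w_1) ∏_{j=1}^{m-1} P(w_j, w_{j+1})` of a finite word `w`. -/
def mweight (p q : ℝ) (w : List Bool) : ℝ :=
  if w = [] then 1
  else initProb p (w.getD 0 false) *
    ∏ j ∈ Finset.range (w.length - 1), transProb p q (w.getD j false) (w.getD (j + 1) false)

/-- The subword `u|_{J(i)} = (u_i, u_{2i}, u_{4i}, …)` of a finite word `u` along the
geometric progression `J(i) = {2^r i : r ≥ 0}`, keeping the indices `2^r i ≤ |u|`. -/
def subword (u : List Bool) (i : ℕ) : List Bool :=
  ((List.range (u.length + 1)).filter (fun r => 2 ^ r * i ≤ u.length)).map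
    (fun r => u.getD (2 ^ r * i - 1) false)

/-- `ℙ_μ[u] = ∏_{i ≤ n, i odd} μ[u|_{J(i)}]` for a finite word `u` of length `n`. -/
def PmuWord (p q : ℝ) (u : List Bool) : ℝ :=
  ∏ i ∈ (Finset.Icc 1 u.length).filter (fun i => Odd i), mweight p q (subword u i)

/-- `Pm` is the (probability) measure `ℙ_μ` on `Σ₂` determined by its values
`ℙ_μ[u] = ∏_{i odd} μ[u|_{J(i)}]` on cylinder sets. -/
def IsPmu (p q : ℝ) (Pm : Measure Sigma2) : Prop :=
  IsProbabilityMeasure Pm ∧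
    ∀ u : List Bool, Pm (cylinder u) = ENNReal.ofReal (PmuWord p q u)

/-- The initial word `x_1^n = x_1 … x_n` of a sequence. -/
def word (x : Sigma2) (n : ℕ) : List Bool := (List.range n).map x

/-- `N_1(x_m^n) = #{k ∈ [m,n] : x_k = 1}`. -/
def N1 (x : Sigma2) (m n : ℕ) : ℕ :=
  ((Finset.Icc m n).filter (fun k => x (k - 1) = true)).card

/-- `N_{ij}(x_1^m) = #{k ≤ m : x_k = i, x_{2k} = j}` (digits `i, j` as booleans). -/
def Nij (x : Sigma2) (i j : Bool) (m : ℕ) : ℕ :=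
  ((Finset.Icc 1 m).filter (fun k => x (k - 1) = i ∧ x (2 * k - 1) = j)).card

/-- `N_{1,odd}(x_1^n) = #{k ≤ n : k odd, x_k = 1}`. -/
def N1odd (x : Sigma2) (n : ℕ) : ℕ :=
  ((Finset.Icc 1 n).filter (fun k => Odd k ∧ x (k - 1) = true)).card

/-- The binary entropy function `H(t) = -t log₂ t - (1-t) log₂ (1-t)`. -/
def Hent (t : ℝ) : ℝ := -(t * Real.logb 2 t) - (1 - t) * Real.logb 2 (1 - t)

/-! If the pairs `x_k x_{2k}` have density 1, then for every `δ > 0` eventually at most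
`δ n` of the first `n` digits are `0`. Weighting each word of length `n` by
`δ ^ (number of zeros)` shows that there are at most `((1 + δ) / δ ^ δ) ^ n` such words, so the
sequences are covered by that many cylinders of diameter `2⁻ⁿ` and form a set of dimension at
most `log₂ ((1 + δ) / δ ^ δ)`, which tends to `0` with `δ`. -/

open Topology
open scoped ENNReal NNReal Finset

def firstDigits (x : Sigma2) (n : ℕ) : Fin n → Bool := fun i => x i

theorem ediam_firstDigits_fiber_le (n : ℕ) (v : Fin n → Bool) :
    Metric.ediam {x : Sigma2 | firstDigits x n = v} ≤ 2⁻¹ ^ n := by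
  refine Metric.ediam_le fun x hx y hy => ?_
  have hxy : x ∈ PiNat.cylinder y n := fun i hi => congrFun (hx.trans hy.symm) ⟨i, hi⟩
  rw [edist_dist, ← ENNReal.ofReal_ofNat 2, ← ENNReal.ofReal_inv_of_pos two_pos,
    ← ENNReal.ofReal_pow (by norm_num), inv_eq_one_div]
  exact ENNReal.ofReal_le_ofReal (PiNat.mem_cylinder_iff_dist_le.1 hxy)

theorem dimH_le_of_card_firstDigits_le {s : Set Sigma2} {a : ℝ≥0∞} {d : ℝ≥0}
    (W : ∀ n, Finset (Fin n → Bool)) (ha : a < 2 ^ (d : ℝ))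
    (hW : ∀ᶠ n in atTop,
      (#(W n) : ℝ≥0∞) ≤ a ^ n ∧ ∀ x ∈ s, firstDigits x n ∈ W n) :
    dimH s ≤ d := by
  have h2d : (2 : ℝ≥0∞) ^ (d : ℝ) ≠ 0 := by positivity
  have h2d' : (2 : ℝ≥0∞) ^ (d : ℝ) ≠ ⊤ := by simp
  have hcover : μH[d] s ≤ liminf (fun n => ∑ v : W n,
      Metric.ediam {x : Sigma2 | firstDigits x n = v} ^ (d : ℝ)) atTop :=
    Measure.hausdorffMeasure_le_liminf_sum _ s (fun n => 2⁻¹ ^ n)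
      (ENNReal.tendsto_pow_atTop_nhds_zero_of_lt_one (by norm_num)) _
      (.of_forall fun n v => ediam_firstDigits_fiber_le n v)
      (hW.mono fun n hn x hx => mem_iUnion.2 ⟨⟨_, hn.2 x hx⟩, rfl⟩)
  have hsum : ∀ᶠ n in atTop, ∑ v : W n,
      Metric.ediam {x : Sigma2 | firstDigits x n = v} ^ (d : ℝ) ≤ (a / 2 ^ (d : ℝ)) ^ n := by
    filter_upwards [hW] with n hn
    calc ∑ v : W n, Metric.ediam {x : Sigma2 | firstDigits x n = v} ^ (d : ℝ)
        ≤ ∑ _v : W n, ((2 : ℝ≥0∞) ^ (d : ℝ))⁻¹ ^ n := by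
          refine Finset.sum_le_sum fun v _ => ?_
          rw [← ENNReal.inv_rpow, ← ENNReal.rpow_natCast, ← ENNReal.rpow_mul, mul_comm,
            ENNReal.rpow_mul, ENNReal.rpow_natCast]
          exact ENNReal.rpow_le_rpow (ediam_firstDigits_fiber_le n v) d.2
      _ = #(W n) * ((2 : ℝ≥0∞) ^ (d : ℝ))⁻¹ ^ n := by simp
      _ ≤ a ^ n * ((2 : ℝ≥0∞) ^ (d : ℝ))⁻¹ ^ n := by gcongr; exact hn.1
      _ = (a / 2 ^ (d : ℝ)) ^ n := by rw [div_eq_mul_inv, mul_pow]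
  have hlim : Tendsto (fun n : ℕ => (a / 2 ^ (d : ℝ)) ^ n) atTop (𝓝 0) :=
    ENNReal.tendsto_pow_atTop_nhds_zero_of_lt_one
      ((ENNReal.div_lt_iff (.inl h2d) (.inl h2d')).2 (by simpa using ha))
  refine dimH_le_of_hausdorffMeasure_ne_top (ne_top_of_le_ne_top ENNReal.zero_ne_top ?_)
  calc μH[d] s ≤ _ := hcover
    _ ≤ liminf (fun n : ℕ => (a / 2 ^ (d : ℝ)) ^ n) atTop := liminf_le_liminf hsum
    _ = 0 := hlim.liminf_eq

theorem sum_pow_card_false {R : Type*} [CommSemiring R] (t : R) (n : ℕ) :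
    ∑ v : Fin n → Bool, t ^ #{i | v i = false} = (1 + t) ^ n := by
  have hprod (v : Fin n → Bool) : ∏ i, (if v i then 1 else t) = t ^ #{i | v i = false} := by
    rw [Finset.prod_ite, Finset.prod_const_one, one_mul, Finset.prod_const]
    simp
  simp_rw [← hprod, ← Fintype.prod_sum (fun _ b => if b = true then (1 : R) else t)]
  simp

def sparseWords (δ : ℝ) (n : ℕ) : Finset (Fin n → Bool) :=
  {v | (#{i | v i = false} : ℝ) ≤ δ * n}

theorem card_sparseWords_le {δ : ℝ} (hδ0 : 0 < δ) (hδ1 : δ ≤ 1) (n : ℕ) :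
    (#(sparseWords δ n) : ℝ) ≤ ((1 + δ) / δ ^ δ) ^ n := by
  have hpow : (δ ^ δ) ^ n = δ ^ (δ * n) := by
    rw [← Real.rpow_natCast, ← Real.rpow_mul hδ0.le]
  rw [div_pow, hpow, le_div_iff₀ (by positivity), ← sum_pow_card_false]
  calc (#(sparseWords δ n) : ℝ) * δ ^ (δ * n)
        = ∑ _v ∈ sparseWords δ n, δ ^ (δ * n) := by simp
    _ ≤ ∑ v ∈ sparseWords δ n, δ ^ #{i | v i = false} := by
        refine Finset.sum_le_sum fun v hv => ?_
        rw [← Real.rpow_natCast]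
        exact Real.rpow_le_rpow_of_exponent_ge hδ0 hδ1 (Finset.mem_filter.1 hv).2
    _ ≤ ∑ v : Fin n → Bool, δ ^ #{i | v i = false} :=
        Finset.sum_le_sum_of_subset_of_nonneg (Finset.subset_univ _) fun _ _ _ => by positivity

def zeroSparse (δ : ℝ) (N : ℕ) : Set Sigma2 :=
  {x | ∀ n ≥ N, firstDigits x n ∈ sparseWords δ n}

theorem sum_xval_mul_add_card_false_le (x : Sigma2) (n : ℕ) :
    ∑ k ∈ Finset.Icc 1 n, xval x k * xval x (2 * k) + #{i | firstDigits x n i = false}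
      ≤ n := by
  have hterm (i : Fin n) :
      xval x (i + 1) * xval x (2 * (i + 1)) + (if x i = false then 1 else 0) ≤ 1 := by
    have h2 : xval x (2 * (i + 1)) ≤ 1 := by unfold xval; split <;> norm_num
    cases hxi : x i
    · simp [xval, hxi]
    · simpa [xval, hxi] using h2
  calc ∑ k ∈ Finset.Icc 1 n, xval x k * xval x (2 * k) + #{i | firstDigits x n i = false}
      = ∑ i : Fin n,
          (xval x (i + 1) * xval x (2 * (i + 1)) + (if x i = false then 1 else 0)) := by
        rw [Finset.sum_add_distrib, Finset.sum_boole, ← Finset.Ico_add_one_right_eq_Icc,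
          Finset.sum_Ico_eq_sum_range,
          ← Fin.sum_univ_eq_sum_range (fun i => xval x (1 + i) * xval x (2 * (1 + i)))]
        simp only [add_comm 1]
        rfl
    _ ≤ ∑ _i : Fin n, (1 : ℝ) := Finset.sum_le_sum fun i _ => hterm i
    _ = n := by simp

theorem Aset_one_subset_iUnion_zeroSparse {δ : ℝ} (hδ : 0 < δ) :
    Aset 1 ⊆ ⋃ N, zeroSparse δ N := by
  intro x hx
  have hdensity : ∀ᶠ n : ℕ in atTop,
      1 - δ < (∑ k ∈ Finset.Icc 1 n, xval x k * xval x (2 * k)) / n :=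
    hx.eventually (eventually_gt_nhds (by linarith))
  obtain ⟨N, hN⟩ := eventually_atTop.1 (hdensity.and (eventually_gt_atTop 0))
  refine mem_iUnion.2 ⟨N, fun n hn => Finset.mem_filter.2 ⟨Finset.mem_univ _, ?_⟩⟩
  obtain ⟨hlt, hpos⟩ := hN n hn
  rw [lt_div_iff₀ (by exact_mod_cast hpos)] at hlt
  linarith [sum_xval_mul_add_card_false_le x n]

theorem exists_pos_div_rpow_self_lt {b : ℝ} (hb : 1 < b) :
    ∃ δ : ℝ, 0 < δ ∧ δ ≤ 1 ∧ (1 + δ) / δ ^ δ < b := by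
  have hlim : Tendsto (fun δ : ℝ => (1 + δ) / δ ^ δ) (𝓝[>] 0) (𝓝 1) := by
    have hcont : Continuous fun δ : ℝ => (1 + δ) / rexp (δ * log δ) :=
      (continuous_const.add continuous_id).div Real.continuous_mul_log.rexp
        fun _ => (Real.exp_pos _).ne'
    have hlim0 : Tendsto (fun δ : ℝ => (1 + δ) / rexp (δ * log δ)) (𝓝 0) (𝓝 1) := by
      simpa using hcont.tendsto 0
    refine (hlim0.mono_left nhdsWithin_le_nhds).congr' ?_
    filter_upwards [self_mem_nhdsWithin] with δ hδ
    rw [Real.rpow_def_of_pos hδ, mul_comm]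
  obtain ⟨δ, hδb, hδ⟩ := ((hlim.eventually (eventually_lt_nhds hb)).and
    (Ioc_mem_nhdsGT zero_lt_one)).exists
  exact ⟨δ, hδ.1, hδ.2, hδb⟩

/-- `dim_H(A_1) = 0`. -/
theorem dimH_Aset_one : dimH (Aset 1) = 0 := by
  refine nonpos_iff_eq_zero.1 (ENNReal.le_of_forall_pos_le_add fun d hd _ => ?_)
  obtain ⟨δ, hδ0, hδ1, hδd⟩ := exists_pos_div_rpow_self_lt (b := 2 ^ (d : ℝ))
    (Real.one_lt_rpow one_lt_two (by exact_mod_cast hd))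
  have hδd' : ENNReal.ofReal ((1 + δ) / δ ^ δ) < 2 ^ (d : ℝ) := by
    rwa [← ENNReal.ofReal_ofNat 2, ENNReal.ofReal_rpow_of_pos two_pos,
      ENNReal.ofReal_lt_ofReal_iff (by positivity)]
  have hcount (n : ℕ) :
      (#(sparseWords δ n) : ℝ≥0∞) ≤ ENNReal.ofReal ((1 + δ) / δ ^ δ) ^ n := by
    rw [← ENNReal.ofReal_pow (by positivity), ← ENNReal.ofReal_natCast]
    exact ENNReal.ofReal_le_ofReal (card_sparseWords_le hδ0 hδ1 n)
  rw [zero_add]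
  calc dimH (Aset 1) ≤ dimH (⋃ N, zeroSparse δ N) :=
        dimH_mono (Aset_one_subset_iUnion_zeroSparse hδ0)
    _ = ⨆ N, dimH (zeroSparse δ N) := dimH_iUnion _
    _ ≤ d := iSup_le fun N => dimH_le_of_card_firstDigits_le (sparseWords δ) hδd'
        (eventually_atTop.2 ⟨N, fun n hn => ⟨hcount n, fun _ hx => hx n hn⟩⟩)
end
end

section
/- For every θ ∈ (0,1) there exist p, q ∈ (0,1) such that p²q = (1−p)³ and θ = 2p(1−q)/(1+p+q). -/
open Filter MeasureTheory Real Set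

noncomputable section

/-- For every `θ ∈ (0,1)` there exist `p, q ∈ (0,1)` such that `p²q = (1-p)³` and
`θ = 2p(1-q)/(1+p+q)`. -/
theorem exists_pq (θ : ℝ) (hθ : θ ∈ Set.Ioo (0 : ℝ) 1) :
    ∃ p q : ℝ, p ∈ Set.Ioo (0 : ℝ) 1 ∧ q ∈ Set.Ioo (0 : ℝ) 1 ∧
      p ^ 2 * q = (1 - p) ^ 3 ∧ θ = 2 * p * (1 - q) / (1 + p + q) := by
  obtain ⟨hθ0, hθ1⟩ := hθ
  set F : ℝ → ℝ := fun p => 2 * p * (p ^ 2 - (1 - p) ^ 3) / ((1 + p) * p ^ 2 + (1 - p) ^ 3)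
    with hF
  have hden : ∀ p ∈ Set.Icc (0 : ℝ) 1, (1 + p) * p ^ 2 + (1 - p) ^ 3 ≠ 0 := by
    intro p hp
    have h0 := hp.1; have h1 := hp.2
    nlinarith [sq_nonneg p, sq_nonneg (1 - p)]
  have hcont : ContinuousOn F (Set.Icc 0 1) := by
    apply ContinuousOn.div
    · fun_prop
    · fun_prop
    · exact hden
  have hmem : θ ∈ Set.Ioo (F 0) (F 1) := by
    have h0 : F 0 = 0 := by norm_num [hF]
    have h1 : F 1 = 1 := by norm_num [hF]
    rw [h0, h1]; exact ⟨hθ0, hθ1⟩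
  obtain ⟨p, hp, hFp⟩ := intermediate_value_Ioo (by norm_num : (0:ℝ) ≤ 1) hcont hmem
  have hp0 : 0 < p := hp.1
  have hp1 : p < 1 := hp.2
  have hp2 : (0:ℝ) < p ^ 2 := by positivity
  have hD : 0 < (1 + p) * p ^ 2 + (1 - p) ^ 3 := by nlinarith
  -- from F p = θ > 0 deduce numerator positivity
  have hN : 0 < p ^ 2 - (1 - p) ^ 3 := by
    by_contra h
    push_neg at h
    have : F p ≤ 0 := by
      rw [hF]
      apply div_nonpos_of_nonpos_of_nonneg
      · nlinarith
      · linarith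
    rw [hFp] at this; linarith
  refine ⟨p, (1 - p) ^ 3 / p ^ 2, ⟨hp0, hp1⟩, ?_, ?_, ?_⟩
  · constructor
    · exact div_pos (pow_pos (by linarith) 3) hp2
    · rw [div_lt_one hp2]; linarith
  · field_simp
  · rw [← hFp, hF]
    field_simp
end
end

section
/- Fix θ ∈ (0,1). The maximum of s(p,q) := ((1+q)H(p) + p·H(q))/(1+p+q) over pairs (p,q) ∈ (0,1)² subject to the constraint θ = 2p(1−q)/(1+p+q) is achieved at the point satisfying p²q = (1−p)³, and the maximal value equals f(θ) = −log₂(1−p) − (θ/2)·log₂[((1−q)(1−p))/(q·p)] evaluated at that point. -/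
open Filter MeasureTheory Real Set

noncomputable section

/-! Gibbs' inequality bounds `(1 + q') H(p') + p' H(q')` by the cross entropy against the point
`(p, q)`. The relation `p²q = (1-p)³` is exactly what makes this bound an affine function of
`1 + p' + q'` and `p'(1 - q')`, so after dividing by `1 + p' + q'` it depends on `(p', q')` only
through the constraint value `2p'(1 - q')/(1 + p' + q')`; at `(p', q') = (p, q)` it is attained. -/

def binCrossEntropy (x a : ℝ) : ℝ := -(x * Real.logb 2 a) - (1 - x) * Real.logb 2 (1 - a)

lemma mul_log_le_mul_log_add_sub {x a : ℝ} (hx : 0 ≤ x) (ha : 0 < a) :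
    x * Real.log a ≤ x * Real.log x + (a - x) := by
  rcases hx.eq_or_lt with rfl | hx
  · simpa using ha.le
  have h := Real.log_le_sub_one_of_pos (div_pos ha hx)
  rw [Real.log_div ha.ne' hx.ne'] at h
  have e : x * (a / x - 1) = a - x := by field_simp
  linarith [mul_le_mul_of_nonneg_left h hx.le]

lemma Hent_le_binCrossEntropy {x a : ℝ} (hx : x ∈ Icc (0 : ℝ) 1) (ha : a ∈ Ioo (0 : ℝ) 1) :
    Hent x ≤ binCrossEntropy x a := by
  have h₁ := mul_log_le_mul_log_add_sub hx.1 ha.1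
  have h₂ := mul_log_le_mul_log_add_sub (sub_nonneg.2 hx.2) (sub_pos.2 ha.2)
  have hgap : 0 ≤ (x * Real.log x + (1 - x) * Real.log (1 - x)
      - x * Real.log a - (1 - x) * Real.log (1 - a)) / Real.log 2 :=
    div_nonneg (by linarith) (Real.log_pos one_lt_two).le
  have e : binCrossEntropy x a - Hent x = (x * Real.log x + (1 - x) * Real.log (1 - x)
      - x * Real.log a - (1 - x) * Real.log (1 - a)) / Real.log 2 := by
    simp only [binCrossEntropy, Hent, Real.logb]
    ring
  linarith

lemma binCrossEntropy_combination_eq {p q : ℝ} (hp : p ∈ Ioo (0 : ℝ) 1) (hq : q ∈ Ioo (0 : ℝ) 1)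
    (hpq : p ^ 2 * q = (1 - p) ^ 3) (p' q' : ℝ) :
    (1 + q') * binCrossEntropy p' p + p' * binCrossEntropy q' q =
      (1 + p' + q') * -Real.logb 2 (1 - p)
        - p' * (1 - q') * Real.logb 2 ((1 - q) * (1 - p) / (q * p)) := by
  obtain ⟨hp₀, hp₁⟩ := hp
  obtain ⟨hq₀, hq₁⟩ := hq
  have hlog : 2 * Real.logb 2 p + Real.logb 2 q = 3 * Real.logb 2 (1 - p) := by
    have h := congrArg (Real.logb 2) hpq
    rwa [Real.logb_mul (by positivity) hq₀.ne', Real.logb_pow, Real.logb_pow] at h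
  rw [Real.logb_div (by nlinarith) (by positivity), Real.logb_mul (by linarith) (by linarith),
    Real.logb_mul hq₀.ne' hp₀.ne']
  simp only [binCrossEntropy]
  linear_combination (-p') * hlog

lemma entropy_ratio_le {p q p' q' : ℝ} (hp : p ∈ Ioo (0 : ℝ) 1) (hq : q ∈ Ioo (0 : ℝ) 1)
    (hpq : p ^ 2 * q = (1 - p) ^ 3) (hp' : p' ∈ Icc (0 : ℝ) 1) (hq' : q' ∈ Icc (0 : ℝ) 1) :
    ((1 + q') * Hent p' + p' * Hent q') / (1 + p' + q') ≤
      -Real.logb 2 (1 - p) - 2 * p' * (1 - q') / (1 + p' + q') / 2 *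
        Real.logb 2 ((1 - q) * (1 - p) / (q * p)) := by
  have hpos : 0 < 1 + p' + q' := by linarith [hp'.1, hq'.1]
  have hbound : (1 + q') * Hent p' + p' * Hent q' ≤
      (1 + q') * binCrossEntropy p' p + p' * binCrossEntropy q' q := by
    gcongr
    · linarith [hq'.1]
    · exact Hent_le_binCrossEntropy hp' hp
    · exact hp'.1
    · exact Hent_le_binCrossEntropy hq' hq
  rw [binCrossEntropy_combination_eq hp hq hpq] at hbound
  rw [div_le_iff₀ hpos]
  refine hbound.trans_eq ?_
  field_simp

lemma entropy_ratio_eq {p q : ℝ} (hp : p ∈ Ioo (0 : ℝ) 1) (hq : q ∈ Ioo (0 : ℝ) 1)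
    (hpq : p ^ 2 * q = (1 - p) ^ 3) :
    ((1 + q) * Hent p + p * Hent q) / (1 + p + q) =
      -Real.logb 2 (1 - p) - 2 * p * (1 - q) / (1 + p + q) / 2 *
        Real.logb 2 ((1 - q) * (1 - p) / (q * p)) := by
  have hpos : 0 < 1 + p + q := by linarith [hp.1, hq.1]
  rw [div_eq_iff hpos.ne']
  refine (binCrossEntropy_combination_eq hp hq hpq p q).trans ?_
  field_simp

theorem s_constrained_max_general (θ : ℝ) (p q : ℝ)
    (hp : p ∈ Set.Ioo (0 : ℝ) 1) (hq : q ∈ Set.Ioo (0 : ℝ) 1)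
    (hpq : p ^ 2 * q = (1 - p) ^ 3) (hth : θ = 2 * p * (1 - q) / (1 + p + q)) :
    (∀ p' q' : ℝ, p' ∈ Set.Ioo (0 : ℝ) 1 → q' ∈ Set.Ioo (0 : ℝ) 1 →
        θ = 2 * p' * (1 - q') / (1 + p' + q') →
        ((1 + q') * Hent p' + p' * Hent q') / (1 + p' + q') ≤
          ((1 + q) * Hent p + p * Hent q) / (1 + p + q)) ∧
    ((1 + q) * Hent p + p * Hent q) / (1 + p + q) =
      -Real.logb 2 (1 - p) - θ / 2 * Real.logb 2 ((1 - q) * (1 - p) / (q * p)) := by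
  subst hth
  rw [entropy_ratio_eq hp hq hpq]
  refine ⟨fun p' q' hp' hq' hth' => ?_, rfl⟩
  rw [hth']
  exact entropy_ratio_le hp hq hpq (Ioo_subset_Icc_self hp') (Ioo_subset_Icc_self hq')

/-- Lemma 2.2(iii): for fixed `θ ∈ (0,1)`, the maximum of `s(p,q)` over `(p,q) ∈ (0,1)²`
subject to `θ = 2p(1-q)/(1+p+q)` is achieved at the point with `p²q = (1-p)³`, and equals
`f(θ) = -log₂(1-p) - (θ/2) log₂[((1-q)(1-p))/(qp)]`. -/
theorem s_constrained_max (θ : ℝ) (hθ : θ ∈ Set.Ioo (0 : ℝ) 1) (p q : ℝ)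
    (hp : p ∈ Set.Ioo (0 : ℝ) 1) (hq : q ∈ Set.Ioo (0 : ℝ) 1)
    (hpq : p ^ 2 * q = (1 - p) ^ 3) (hth : θ = 2 * p * (1 - q) / (1 + p + q)) :
    (∀ p' q' : ℝ, p' ∈ Set.Ioo (0 : ℝ) 1 → q' ∈ Set.Ioo (0 : ℝ) 1 →
        θ = 2 * p' * (1 - q') / (1 + p' + q') →
        ((1 + q') * Hent p' + p' * Hent q') / (1 + p' + q') ≤
          ((1 + q) * Hent p + p * Hent q) / (1 + p + q)) ∧
    ((1 + q) * Hent p + p * Hent q) / (1 + p + q) =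
      -Real.logb 2 (1 - p) - θ / 2 * Real.logb 2 ((1 - q) * (1 - p) / (q * p)) :=
  s_constrained_max_general θ p q hp hq hpq hth
end
end

section
/- If p, q ∈ (0,1) satisfy p²q = (1−p)³ and θ = 2p(1−q)/(1+p+q), then −log₂(1−p) − (θ/2)·log₂[((1−q)(1−p))/(q·p)] = ((1+q)H(p) + p·H(q))/(1+p+q), i.e. f(θ) = s(p,q). -/
open Filter MeasureTheory Real Set

noncomputable section

/-- If `p, q ∈ (0,1)` satisfy `p²q = (1-p)³` and `θ = 2p(1-q)/(1+p+q)`, then `f(θ) = s(p,q)`. -/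
theorem f_eq_s (p q θ : ℝ) (hp : p ∈ Set.Ioo (0 : ℝ) 1) (hq : q ∈ Set.Ioo (0 : ℝ) 1)
    (hpq : p ^ 2 * q = (1 - p) ^ 3) (hth : θ = 2 * p * (1 - q) / (1 + p + q)) :
    -Real.logb 2 (1 - p) - θ / 2 * Real.logb 2 ((1 - q) * (1 - p) / (q * p)) =
      ((1 + q) * Hent p + p * Hent q) / (1 + p + q) := by
  obtain ⟨hp0, hp1⟩ := hp
  obtain ⟨hq0, hq1⟩ := hq
  have h1p : (0:ℝ) < 1 - p := by linarith
  have h1q : (0:ℝ) < 1 - q := by linarith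
  have hs : (1:ℝ) + p + q ≠ 0 := by positivity
  have hlog : 2 * Real.logb 2 p + Real.logb 2 q = 3 * Real.logb 2 (1 - p) := by
    have h := congrArg (Real.logb 2) hpq
    rw [Real.logb_mul (by positivity) hq0.ne', Real.logb_pow, Real.logb_pow] at h
    push_cast at h
    linarith
  have hexp : Real.logb 2 ((1 - q) * (1 - p) / (q * p)) =
      Real.logb 2 (1 - q) + Real.logb 2 (1 - p) - (Real.logb 2 q + Real.logb 2 p) := by
    rw [Real.logb_div (by positivity) (by positivity),
      Real.logb_mul h1q.ne' h1p.ne', Real.logb_mul hq0.ne' hp0.ne']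
  subst hth
  rw [hexp]
  unfold Hent
  field_simp
  ring_nf
  nlinarith [hlog, sq_nonneg p]
end
end

section
/- Let p, q ∈ (0,1) satisfy p²q = (1−p)³, and let θ = 2p(1−q)/(1+p+q). Then for every x ∈ A_θ, liminf_{n→∞} (−log₂ ℙ_μ[x_1^n])/n ≤ f(θ) := −log₂(1−p) − (θ/2)·log₂[((1−q)(1−p))/(q·p)]. -/
/-!
Unwinding the product over the chains `J(i)`, every index `k ≤ n / 2` is `2 ^ j * i` with `i` odd
in exactly one way, so `ℙ_μ[x_1^n] = ∏_{i ≤ n odd} π(x_i) · ∏_{k ≤ n/2} P(x_k, x_{2k})`. Hence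
`-log₂ ℙ_μ[x_1^n]` is affine in the number of ones in `x_1^n`, in `x_1^{n/2}`, and in the number
of `k ≤ n/2` with `x_k = x_{2k} = 1`. The relation `p²q = (1-p)³` makes the coefficients of the two
counts of ones `c` and `-2c`, so at `n = 2m` the normalized information is `c` times the increment
of the density of ones from `m` to `2m`, plus a term which, for `x ∈ A_θ`, tends to `f(θ)`. Along
`m = 2^k` these increments telescope against a bounded density, so they are frequently almost
nonpositive, and the liminf is at most `f(θ)`.
-/

open Filter MeasureTheory Real Set

noncomputable section

open Finset

lemma List.filter_range_eq_range_of_iff {m t : ℕ} (P : ℕ → Prop) [DecidablePred P]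
    (ht : t ≤ m) (hP : ∀ r, P r ↔ r < t) :
    (List.range m).filter (fun r => decide (P r)) = List.range t := by
  obtain ⟨s, rfl⟩ := Nat.exists_eq_add_of_le ht
  rw [List.range_add, List.filter_append, List.filter_eq_self.2, List.filter_eq_nil_iff.2]
  · simp
  · simp only [List.mem_map, List.mem_range]
    rintro _ ⟨j, -, rfl⟩
    simpa using fun h => absurd ((hP _).1 h) (by omega)
  · simp only [List.mem_range]
    exact fun a ha => by simpa using (hP a).2 ha

lemma word_length (x : Sigma2) (n : ℕ) : (word x n).length = n := by
  simp [word]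

lemma word_getD (x : Sigma2) {n j : ℕ} (h : j < n) : (word x n).getD j false = x j := by
  simp [word, List.getD_eq_getElem?_getD, h]

lemma mweight_word_succ (p q : ℝ) (y : Sigma2) (m : ℕ) :
    mweight p q (word y (m + 1)) =
      initProb p (y 0) * ∏ j ∈ range m, transProb p q (y j) (y (j + 1)) := by
  have hne : word y (m + 1) ≠ [] := by simp [word]
  rw [mweight, if_neg hne, word_getD y m.succ_pos, word_length, Nat.add_sub_cancel]
  refine congrArg _ (prod_congr rfl fun j hj => ?_)
  rw [Finset.mem_range] at hj
  rw [word_getD y (by omega), word_getD y (by omega)]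

lemma pow_mul_le_iff_le_log {i n j : ℕ} (hi : 1 ≤ i) (hin : i ≤ n) :
    2 ^ j * i ≤ n ↔ j ≤ Nat.log 2 (n / i) := by
  have hd : 1 ≤ n / i := (Nat.one_le_div_iff (by omega)).2 hin
  rw [← Nat.le_div_iff_mul_le (by omega), ← Nat.le_log_iff_pow_le one_lt_two (by omega)]

lemma subword_word (x : Sigma2) {n i : ℕ} (hi : 1 ≤ i) (hin : i ≤ n) :
    subword (word x n) i = word (fun r => x (2 ^ r * i - 1)) (Nat.log 2 (n / i) + 1) := by
  have hlog : Nat.log 2 (n / i) < n + 1 :=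
    Nat.lt_succ_of_le ((Nat.log_le_self 2 _).trans (Nat.div_le_self n i))
  rw [subword, word_length, List.filter_range_eq_range_of_iff _ hlog fun r => by
    rw [pow_mul_le_iff_le_log hi hin, Nat.lt_succ_iff]]
  refine List.map_congr_left fun r hr => word_getD x ?_
  have := (pow_mul_le_iff_le_log (j := r) hi hin).2 (Nat.lt_succ_iff.1 (List.mem_range.1 hr))
  have := Nat.one_le_two_pow.trans (Nat.le_mul_of_pos_right (2 ^ r) hi)
  omega

/-- Every `k ≥ 1` is uniquely `2 ^ j * i` with `i` odd; and `k ≤ n / 2` iff `j < log₂ (n / i)`. -/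
lemma prod_odd_prod_two_pow_mul {M : Type*} [CommMonoid M] (n : ℕ) (G : ℕ → M) :
    ∏ i ∈ (Finset.Icc 1 n).filter Odd, ∏ j ∈ range (Nat.log 2 (n / i)), G (2 ^ j * i) =
      ∏ k ∈ Finset.Icc 1 (n / 2), G k := by
  rw [prod_sigma']
  refine prod_nbij' (fun x => 2 ^ x.2 * x.1) (fun k => ⟨ordCompl[2] k, k.factorization 2⟩)
    ?_ ?_ ?_ ?_ fun _ _ => rfl
  · rintro ⟨i, j⟩ hx
    simp only [mem_sigma, mem_filter, Finset.mem_Icc, Finset.mem_range] at hx ⊢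
    obtain ⟨⟨⟨hi1, hin⟩, -⟩, hj⟩ := hx
    have := (pow_mul_le_iff_le_log (j := j + 1) hi1 hin).2 hj
    refine ⟨Nat.one_le_iff_ne_zero.2 (by positivity), ?_⟩
    rw [Nat.le_div_iff_mul_le two_pos]
    rwa [pow_succ, mul_right_comm] at this
  · intro k hk
    rw [Finset.mem_Icc] at hk
    have hk0 : k ≠ 0 := by omega
    have hk2 : 2 * k ≤ n := by have := (Nat.le_div_iff_mul_le two_pos).1 hk.2; omega
    have hc := Nat.ordCompl_le k 2
    have hc1 := Nat.ordCompl_pos 2 hk0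
    have hodd : ¬ 2 ∣ ordCompl[2] k := Nat.not_dvd_ordCompl Nat.prime_two hk0
    have hkey : 2 ^ (k.factorization 2 + 1) * ordCompl[2] k ≤ n := by
      rw [pow_succ, mul_comm _ 2, mul_assoc, Nat.ordProj_mul_ordCompl_eq_self]
      exact hk2
    simp only [mem_sigma, mem_filter, Finset.mem_Icc, Finset.mem_range]
    refine ⟨⟨⟨hc1, by omega⟩, Nat.odd_iff.2 (by omega)⟩, ?_⟩
    have := (pow_mul_le_iff_le_log hc1 (by omega)).1 hkey
    omega
  · rintro ⟨i, j⟩ hx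
    simp only [mem_sigma, mem_filter, Finset.mem_Icc] at hx
    have hi0 : i ≠ 0 := by omega
    have hodd : ¬ 2 ∣ i := by have := Nat.odd_iff.1 hx.1.2; omega
    have hfac : (2 ^ j * i).factorization 2 = j := by
      rw [Nat.factorization_mul (by positivity) hi0, Finsupp.add_apply,
        Nat.Prime.factorization_pow Nat.prime_two, Finsupp.single_eq_same,
        Nat.factorization_eq_zero_of_not_dvd hodd, add_zero]
    simp only [hfac, Nat.mul_div_cancel_left _ (pow_pos two_pos j)]
  · exact fun k _ => Nat.ordProj_mul_ordCompl_eq_self k 2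

lemma PmuWord_word (p q : ℝ) (x : Sigma2) (n : ℕ) :
    PmuWord p q (word x n) =
      (∏ i ∈ (Finset.Icc 1 n).filter Odd, initProb p (x (i - 1))) *
        ∏ k ∈ Finset.Icc 1 (n / 2), transProb p q (x (k - 1)) (x (2 * k - 1)) := by
  rw [PmuWord, word_length, ← prod_odd_prod_two_pow_mul, ← prod_mul_distrib]
  refine prod_congr rfl fun i hi => ?_
  rw [mem_filter, Finset.mem_Icc] at hi
  rw [subword_word x hi.1.1 hi.1.2, mweight_word_succ, pow_zero, one_mul]
  simp only [pow_succ, mul_comm _ 2, mul_assoc]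

lemma sum_filter_odd_add_sum_two_mul {M : Type*} [AddCommMonoid M] (n : ℕ) (G : ℕ → M) :
    ∑ i ∈ (Finset.Icc 1 n).filter Odd, G i + ∑ k ∈ Finset.Icc 1 (n / 2), G (2 * k) =
      ∑ k ∈ Finset.Icc 1 n, G k := by
  rw [← sum_filter_add_sum_filter_not (Finset.Icc 1 n) Odd G]
  congr 1
  refine sum_nbij' (2 * ·) (· / 2) ?_ ?_ ?_ ?_ fun _ _ => rfl <;>
    simp only [mem_filter, Finset.mem_Icc, Nat.not_odd_iff_even, Nat.even_iff] <;> omega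

section Markov

variable {p q : ℝ}

lemma initProb_pos (hp : p ∈ Set.Ioo (0 : ℝ) 1) (b : Bool) : 0 < initProb p b := by
  cases b <;> simp [initProb, hp.1, hp.2]

lemma transProb_pos (hp : p ∈ Set.Ioo (0 : ℝ) 1) (hq : q ∈ Set.Ioo (0 : ℝ) 1) (a b : Bool) :
    0 < transProb p q a b := by
  cases a <;> cases b <;> simp [transProb, hp.1, hp.2, hq.1, hq.2]

lemma PmuWord_word_pos (hp : p ∈ Set.Ioo (0 : ℝ) 1) (hq : q ∈ Set.Ioo (0 : ℝ) 1)
    (x : Sigma2) (n : ℕ) : 0 < PmuWord p q (word x n) := by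
  rw [PmuWord_word]
  exact mul_pos (prod_pos fun _ _ => initProb_pos hp _)
    (prod_pos fun _ _ => transProb_pos hp hq _ _)

lemma neg_logb_initProb (hp : p ∈ Set.Ioo (0 : ℝ) 1) (b : Bool) :
    -logb 2 (initProb p b) =
      -logb 2 (1 - p) + logb 2 ((1 - p) / p) * (if b then 1 else 0) := by
  rw [logb_div (by linarith [hp.2]) hp.1.ne']
  cases b <;> simp [initProb]
  ring

lemma neg_logb_transProb (hp : p ∈ Set.Ioo (0 : ℝ) 1) (hq : q ∈ Set.Ioo (0 : ℝ) 1)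
    (a b : Bool) :
    -logb 2 (transProb p q a b) =
      -logb 2 (initProb p b) + logb 2 ((1 - p) / q) * (if a then 1 else 0) -
        logb 2 ((1 - q) * (1 - p) / (q * p)) * (if a then 1 else 0) * (if b then 1 else 0) := by
  have hp' : 1 - p ≠ 0 := by linarith [hp.2]
  have hq' : 1 - q ≠ 0 := by linarith [hq.2]
  rw [logb_div hp' hq.1.ne', logb_div (mul_ne_zero hq' hp') (mul_ne_zero hq.1.ne' hp.1.ne'),
    logb_mul hq' hp', logb_mul hq.1.ne' hp.1.ne']
  cases a <;> cases b <;> simp only [transProb, initProb] <;> norm_num <;> ring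

lemma neg_logb_PmuWord_word (hp : p ∈ Set.Ioo (0 : ℝ) 1) (hq : q ∈ Set.Ioo (0 : ℝ) 1)
    (x : Sigma2) (n : ℕ) :
    -logb 2 (PmuWord p q (word x n)) =
      -logb 2 (1 - p) * n + logb 2 ((1 - p) / p) * ∑ k ∈ Finset.Icc 1 n, xval x k +
        logb 2 ((1 - p) / q) * ∑ k ∈ Finset.Icc 1 (n / 2), xval x k -
        logb 2 ((1 - q) * (1 - p) / (q * p)) *
          ∑ k ∈ Finset.Icc 1 (n / 2), xval x k * xval x (2 * k) := by
  have hones : ∑ k ∈ Finset.Icc 1 n, -logb 2 (initProb p (x (k - 1))) =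
      -logb 2 (1 - p) * n + logb 2 ((1 - p) / p) * ∑ k ∈ Finset.Icc 1 n, xval x k := by
    simp only [neg_logb_initProb hp, sum_add_distrib, sum_const, Nat.card_Icc, ← mul_sum,
      nsmul_eq_mul, Nat.add_sub_cancel, xval]
    ring
  rw [← sum_filter_odd_add_sum_two_mul] at hones
  rw [PmuWord_word, logb_mul (prod_pos fun _ _ => initProb_pos hp _).ne'
      (prod_pos fun _ _ => transProb_pos hp hq _ _).ne',
    logb_prod _ _ fun _ _ => (initProb_pos hp _).ne',
    logb_prod _ _ fun _ _ => (transProb_pos hp hq _ _).ne', neg_add, ← sum_neg_distrib,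
    ← sum_neg_distrib, sum_congr rfl fun k _ => neg_logb_transProb hp hq _ _, sum_sub_distrib,
    sum_add_distrib]
  simp only [xval, mul_assoc, ← mul_sum] at hones ⊢
  linear_combination hones

lemma logb_one_sub_div_eq (hp : p ∈ Set.Ioo (0 : ℝ) 1) (hq : q ∈ Set.Ioo (0 : ℝ) 1)
    (hpq : p ^ 2 * q = (1 - p) ^ 3) :
    logb 2 ((1 - p) / q) = -2 * logb 2 ((1 - p) / p) := by
  have hp' : 1 - p ≠ 0 := by linarith [hp.2]
  have hlog := congrArg (logb 2) hpq
  rw [logb_mul (pow_ne_zero 2 hp.1.ne') hq.1.ne', logb_pow, logb_pow] at hlog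
  rw [logb_div hp' hq.1.ne', logb_div hp' hp.1.ne']
  push_cast at hlog
  linarith

end Markov

def freqOnes (x : Sigma2) (n : ℕ) : ℝ := (∑ k ∈ Finset.Icc 1 n, xval x k) / n

def freqPairs (x : Sigma2) (n : ℕ) : ℝ := (∑ k ∈ Finset.Icc 1 n, xval x k * xval x (2 * k)) / n

lemma freqOnes_nonneg (x : Sigma2) (n : ℕ) : 0 ≤ freqOnes x n :=
  div_nonneg (sum_nonneg fun k _ => by unfold xval; split_ifs <;> norm_num) n.cast_nonneg

lemma freqOnes_le_one (x : Sigma2) (n : ℕ) : freqOnes x n ≤ 1 := by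
  refine div_le_one_of_le₀ ?_ n.cast_nonneg
  calc ∑ k ∈ Finset.Icc 1 n, xval x k ≤ ∑ _k ∈ Finset.Icc 1 n, (1 : ℝ) :=
        sum_le_sum fun k _ => by unfold xval; split_ifs <;> norm_num
    _ = n := by simp

lemma bddAbove_range_mul_freqOnes (c : ℝ) (x : Sigma2) (s : ℕ → ℕ) :
    BddAbove (range fun k => c * freqOnes x (s k)) := by
  refine ⟨|c|, forall_mem_range.2 fun k => ?_⟩
  calc c * freqOnes x (s k) ≤ |c| * freqOnes x (s k) :=
        mul_le_mul_of_nonneg_right (le_abs_self c) (freqOnes_nonneg x _)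
    _ ≤ |c| := mul_le_of_le_one_right (abs_nonneg c) (freqOnes_le_one x _)

lemma neg_logb_PmuWord_word_two_mul_div {p q : ℝ} (hp : p ∈ Set.Ioo (0 : ℝ) 1)
    (hq : q ∈ Set.Ioo (0 : ℝ) 1) (hpq : p ^ 2 * q = (1 - p) ^ 3) (x : Sigma2) {m : ℕ}
    (hm : 0 < m) :
    -logb 2 (PmuWord p q (word x (2 * m))) / (2 * m : ℕ) =
      logb 2 ((1 - p) / p) * (freqOnes x (2 * m) - freqOnes x m) +
        (-logb 2 (1 - p) - freqPairs x m / 2 * logb 2 ((1 - q) * (1 - p) / (q * p))) := by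
  have hm' : (m : ℝ) ≠ 0 := by positivity
  rw [neg_logb_PmuWord_word hp hq, Nat.mul_div_cancel_left m two_pos,
    logb_one_sub_div_eq hp hq hpq, freqOnes, freqOnes, freqPairs]
  push_cast
  field_simp
  ring

lemma neg_logb_toReal_measure_div_nonneg {Ω : Type*} [MeasurableSpace Ω] (μ : Measure Ω)
    [IsZeroOrProbabilityMeasure μ] (s : Set Ω) (n : ℕ) : 0 ≤ -logb 2 (μ s).toReal / n :=
  div_nonneg (neg_nonneg.2 (logb_nonpos one_lt_two ENNReal.toReal_nonneg
    (ENNReal.toReal_le_of_le_ofReal zero_le_one (by simpa using prob_le_one)))) n.cast_nonneg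

lemma frequently_sub_lt_of_bddAbove {v : ℕ → ℝ} (hv : BddAbove (range v)) {ε : ℝ}
    (hε : 0 < ε) : ∃ᶠ k in atTop, v (k + 1) - v k < ε := by
  obtain ⟨M, hM⟩ := hv
  rw [mem_upperBounds, forall_mem_range] at hM
  intro hev
  obtain ⟨K, hK⟩ := eventually_atTop.1 hev
  have grow : ∀ j : ℕ, v K + j * ε ≤ v (K + j) := by
    intro j
    induction j with
    | zero => simp
    | succ j ih =>
      have := not_lt.1 (hK (K + j) (by omega))
      push_cast
      rw [← add_assoc]
      linarith
  obtain ⟨j, hj⟩ := exists_nat_gt ((M - v K) / ε)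
  rw [div_lt_iff₀ hε] at hj
  linarith [grow j, hM (K + j)]

lemma liminf_le_of_le_sub_add_of_tendsto {h : ℕ → ℝ} (hh : IsBoundedUnder (· ≥ ·) atTop h)
    {s : ℕ → ℕ} (hs : Tendsto s atTop atTop) {v g : ℕ → ℝ} (hv : BddAbove (range v)) {L : ℝ}
    (hg : Tendsto g atTop (nhds L)) (hsub : ∀ k, h (s k) ≤ v (k + 1) - v k + g k) :
    liminf h atTop ≤ L := by
  refine le_of_forall_pos_le_add fun ε hε => liminf_le_of_frequently_le ?_ hh
  have hgL : ∀ᶠ k in atTop, g k < L + ε / 2 := hg.eventually (gt_mem_nhds (by linarith))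
  refine hs.frequently (((frequently_sub_lt_of_bddAbove hv (half_pos hε)).and_eventually
    hgL).mono fun k hk => ?_)
  linarith [hsub k, hk.1, hk.2]

theorem liminf_le_f_general (p q θ : ℝ) (hp : p ∈ Set.Ioo (0 : ℝ) 1) (hq : q ∈ Set.Ioo (0 : ℝ) 1)
    (hpq : p ^ 2 * q = (1 - p) ^ 3)
    (Pm : Measure Sigma2) (hPm : IsPmu p q Pm) (x : Sigma2) (hx : x ∈ Aset θ) :
    Filter.liminf
        (fun n : ℕ => -Real.logb 2 ((Pm (cylinder (word x n))).toReal) / (n : ℝ)) atTop ≤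
      -Real.logb 2 (1 - p) - θ / 2 * Real.logb 2 ((1 - q) * (1 - p) / (q * p)) := by
  obtain ⟨_, hcyl⟩ := hPm
  have hg := (((show Tendsto (freqPairs x) atTop (nhds θ) from hx).comp
    (tendsto_pow_atTop_atTop_of_one_lt one_lt_two)).div_const 2).mul_const
      (logb 2 ((1 - q) * (1 - p) / (q * p))) |>.const_sub (-logb 2 (1 - p))
  refine liminf_le_of_le_sub_add_of_tendsto
    (isBoundedUnder_of ⟨0, fun n => neg_logb_toReal_measure_div_nonneg Pm _ n⟩)
    (tendsto_id.const_mul_atTop' two_pos |>.comp (tendsto_pow_atTop_atTop_of_one_lt one_lt_two))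
    (bddAbove_range_mul_freqOnes (logb 2 ((1 - p) / p)) x (2 ^ ·)) hg fun k => le_of_eq ?_
  rw [Function.comp_apply, id_eq, hcyl, ENNReal.toReal_ofReal (PmuWord_word_pos hp hq x _).le,
    neg_logb_PmuWord_word_two_mul_div hp hq hpq x (pow_pos two_pos k), pow_succ']
  simp only [Function.comp_apply]
  ring

/-- Lemma 2.3: if `p, q ∈ (0,1)` satisfy `p²q = (1-p)³` and `θ = 2p(1-q)/(1+p+q)`, then for
every `x ∈ A_θ`, `liminf_{n→∞} (-log₂ ℙ_μ[x_1^n])/n ≤ f(θ)`. -/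
theorem liminf_le_f (p q θ : ℝ) (hp : p ∈ Set.Ioo (0 : ℝ) 1) (hq : q ∈ Set.Ioo (0 : ℝ) 1)
    (hpq : p ^ 2 * q = (1 - p) ^ 3) (hth : θ = 2 * p * (1 - q) / (1 + p + q))
    (Pm : Measure Sigma2) (hPm : IsPmu p q Pm) (x : Sigma2) (hx : x ∈ Aset θ) :
    Filter.liminf
        (fun n : ℕ => -Real.logb 2 ((Pm (cylinder (word x n))).toReal) / (n : ℝ)) atTop ≤
      -Real.logb 2 (1 - p) - θ / 2 * Real.logb 2 ((1 - q) * (1 - p) / (q * p)) :=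
  liminf_le_f_general p q θ hp hq hpq Pm hPm x hx
end
end

section
/- Let (z_n)_{n≥1} be a bounded real sequence and suppose there exists c > 0 such that |z_n − z_{n+m}| ≤ c·m/n for all m, n ∈ ℕ. If for every n ∈ ℕ one has z_{2^k n} → γ as k → ∞, then z_n → γ as n → ∞. -/
open Filter MeasureTheory Real Set

noncomputable section

/-! Fix `N ≥ 1`. Every `n ≥ N` lies in a block `[2^k m, 2^k (m + 1))` with `N ≤ m < 2N`, and
the hypothesis on `z` moves `z n` by at most `c 2^k / (2^k m) ≤ c / N` away from `z (2^k m)`.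
Only the finitely many sequences `k ↦ z (2^k m)`, `N ≤ m < 2N`, are involved, so they converge
to `γ` uniformly, and `z n` ends up within `c / N + ε` of `γ`; finally let `N → ∞`. -/

lemma exists_pow_two_mul_le_lt {N n : ℕ} (hN : 0 < N) (hn : N ≤ n) :
    ∃ k m, N ≤ m ∧ m < 2 * N ∧ 2 ^ k * m ≤ n ∧ n < 2 ^ k * (m + 1) := by
  set k := Nat.log 2 (n / N)
  have hk : 0 < 2 ^ k := by positivity
  refine ⟨k, n / 2 ^ k, ?_, ?_, Nat.mul_div_le n _, Nat.lt_mul_div_succ n hk⟩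
  · rw [Nat.le_div_iff_mul_le hk, mul_comm, ← Nat.le_div_iff_mul_le hN]
    exact Nat.pow_log_le_self 2 (Nat.div_pos hn hN).ne'
  · rw [Nat.div_lt_iff_lt_mul hk]
    calc n < 2 ^ (k + 1) * N :=
          (Nat.div_lt_iff_lt_mul hN).mp (Nat.lt_pow_succ_log_self one_lt_two _)
      _ = 2 * N * 2 ^ k := by ring

section

variable {z : ℕ → ℝ} {c : ℝ}
  (hz : ∀ m n : ℕ, 1 ≤ m → 1 ≤ n → |z n - z (n + m)| ≤ c * m / n)
include hz

lemma nonneg_of_abs_sub_le : 0 ≤ c := by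
  simpa using (abs_nonneg _).trans (hz 1 1 le_rfl le_rfl)

lemma abs_sub_le_of_le_of_lt_add {a d n : ℕ} (ha : 1 ≤ a) (hn : a ≤ n) (hnd : n < a + d) :
    |z n - z a| ≤ c * d / a := by
  have hc := nonneg_of_abs_sub_le hz
  obtain ⟨r, rfl⟩ := Nat.exists_eq_add_of_le hn
  rcases Nat.eq_zero_or_pos r with rfl | hr
  · simp only [add_zero, sub_self, abs_zero]
    positivity
  · rw [abs_sub_comm]
    calc |z a - z (a + r)| ≤ c * r / a := hz r a hr ha
      _ ≤ c * d / a := by gcongr; omega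

lemma eventually_abs_sub_lt_div_add {γ : ℝ}
    (hlim : ∀ n : ℕ, 1 ≤ n → Tendsto (fun k : ℕ => z (2 ^ k * n)) atTop (nhds γ))
    {N : ℕ} (hN : 0 < N) {ε : ℝ} (hε : 0 < ε) :
    ∀ᶠ n in atTop, |z n - γ| < c / N + ε := by
  have hc := nonneg_of_abs_sub_le hz
  have hunif : ∀ᶠ k in atTop, ∀ m ∈ Finset.Ico N (2 * N), |z (2 ^ k * m) - γ| < ε := by
    rw [eventually_all_finset]
    intro m hm
    have hm1 : 1 ≤ m := hN.trans_le (Finset.mem_Ico.mp hm).1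
    simpa only [Real.dist_eq] using Metric.tendsto_nhds.mp (hlim m hm1) ε hε
  obtain ⟨K, hK⟩ := eventually_atTop.mp hunif
  filter_upwards [eventually_ge_atTop (2 ^ K * (2 * N))] with n hn
  have hNn : N ≤ n := le_trans (by nlinarith [Nat.one_le_two_pow (n := K)]) hn
  obtain ⟨k, m, hNm, hm2N, hlow, hhigh⟩ := exists_pow_two_mul_le_lt hN hNn
  have hkK : K ≤ k := by
    have : 2 ^ K * (2 * N) < 2 ^ k * (2 * N) :=
      hn.trans_lt (hhigh.trans_le (Nat.mul_le_mul_left _ hm2N))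
    exact (Nat.pow_lt_pow_iff_right one_lt_two).mp (Nat.lt_of_mul_lt_mul_right this) |>.le
  have hm : 0 < m := hN.trans_le hNm
  have hblock : |z n - z (2 ^ k * m)| ≤ c / m := by
    refine (abs_sub_le_of_le_of_lt_add hz (Nat.one_le_iff_ne_zero.mpr (by positivity)) hlow
      (by rwa [mul_add_one] at hhigh)).trans_eq ?_
    push_cast
    field_simp
  calc |z n - γ| ≤ |z n - z (2 ^ k * m)| + |z (2 ^ k * m) - γ| := abs_sub_le _ _ _
    _ < c / m + ε := add_lt_add_of_le_of_lt hblock (hK k hkK m (Finset.mem_Ico.mpr ⟨hNm, hm2N⟩))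
    _ ≤ c / N + ε := by gcongr

end

theorem tendsto_of_tendsto_pow_two_mul_general (z : ℕ → ℝ) (γ c : ℝ)
    (hz : ∀ m n : ℕ, 1 ≤ m → 1 ≤ n → |z n - z (n + m)| ≤ c * m / n)
    (hlim : ∀ n : ℕ, 1 ≤ n → Tendsto (fun k : ℕ => z (2 ^ k * n)) atTop (nhds γ)) :
    Tendsto z atTop (nhds γ) := by
  refine Metric.tendsto_nhds.mpr fun ε hε => ?_
  obtain ⟨N, hN, hcN⟩ := ((eventually_gt_atTop 0).and
    ((tendsto_const_div_atTop_nhds_zero_nat c).eventually (gt_mem_nhds (half_pos hε)))).exists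
  filter_upwards [eventually_abs_sub_lt_div_add hz hlim hN (half_pos hε)] with n hn
  rw [Real.dist_eq]
  linarith

/-- Lemma 3.1: if `(z_n)_{n≥1}` is a bounded real sequence, `|z_n - z_{n+m}| ≤ cm/n` for all
`m, n ≥ 1` (with `c > 0`), and `z_{2^k n} → γ` as `k → ∞` for every `n ≥ 1`, then `z_n → γ`. -/
theorem tendsto_of_tendsto_pow_two_mul (z : ℕ → ℝ) (γ c : ℝ) (hc : 0 < c)
    (hbdd : ∃ M : ℝ, ∀ n : ℕ, 1 ≤ n → |z n| ≤ M)
    (hz : ∀ m n : ℕ, 1 ≤ m → 1 ≤ n → |z n - z (n + m)| ≤ c * m / n)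
    (hlim : ∀ n : ℕ, 1 ≤ n → Tendsto (fun k : ℕ => z (2 ^ k * n)) atTop (nhds γ)) :
    Tendsto z atTop (nhds γ) :=
  tendsto_of_tendsto_pow_two_mul_general z γ c hz hlim
end
end

section
/- Let X_G = {(x_k) ∈ Σ₂ : x_k x_{2k} = 0 for all k ≥ 1}. Then X_G ⊆ A_0 and the Hausdorff dimensions coincide: dim_H(X_G) = dim_H(A_0). -/
open Filter MeasureTheory Real Set

noncomputable section

/-! Clearing `x_{2k}` whenever `x_k = x_{2k} = 1` maps `Σ₂` into `X_G`, and changes at most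
`N_{11}(x_1^n)` of the first `n` digits. For `x ∈ A_0` this is eventually at most `n / 2^p`, so
each cylinder of length `n` in a cover of `X_G` is replaced by the at most `2^{(p+2)n/2^p}`
cylinders obtained by flipping a sparse set of its digits. This gives
`dim_H A_0 ≤ dim_H X_G + (p+2)/2^p` for every `p`. -/

open scoped ENNReal NNReal Finset
open Metric

lemma sum_choose_le_pow_mul_one_add_inv_pow {a : ℝ} (ha : 1 ≤ a) {t n : ℕ} (htn : t ≤ n) :
    ∑ j ∈ Finset.range (t + 1), (n.choose j : ℝ) ≤ a ^ t * (1 + a⁻¹) ^ n := by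
  have ha0 : a ≠ 0 := by positivity
  calc ∑ j ∈ Finset.range (t + 1), (n.choose j : ℝ)
      ≤ ∑ j ∈ Finset.range (t + 1), a ^ t * (a⁻¹ ^ j * 1 ^ (n - j) * n.choose j) := by
        refine Finset.sum_le_sum fun j hj => ?_
        have hjt : j ≤ t := Finset.mem_range_succ_iff.1 hj
        have : a ^ t * a⁻¹ ^ j = a ^ (t - j) := by
          rw [← pow_sub_mul_pow a hjt, mul_assoc, ← mul_pow, mul_inv_cancel₀ ha0, one_pow, mul_one]
        rw [one_pow, mul_one, ← mul_assoc, this]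
        exact le_mul_of_one_le_left (by positivity) (one_le_pow₀ ha)
    _ ≤ ∑ j ∈ Finset.range (n + 1), a ^ t * (a⁻¹ ^ j * 1 ^ (n - j) * n.choose j) :=
        Finset.sum_le_sum_of_subset_of_nonneg (Finset.range_subset_range.2 (by omega))
          fun _ _ _ => by positivity
    _ = a ^ t * (1 + a⁻¹) ^ n := by rw [← Finset.mul_sum, ← add_pow, add_comm]

lemma exists_cover_tsum_lt_of_hausdorffMeasure_eq_zero {X : Type*} [EMetricSpace X]
    [MeasurableSpace X] [BorelSpace X] {A : Set X} {d : ℝ} (hA : μH[d] A = 0) {r η : ℝ≥0∞}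
    (hr : 0 < r) (hη : 0 < η) :
    ∃ t : ℕ → Set X, A ⊆ ⋃ i, t i ∧ (∀ i, ediam (t i) ≤ r) ∧
      ∑' i, ⨆ _ : (t i).Nonempty, ediam (t i) ^ d < η := by
  rw [Measure.hausdorffMeasure_apply] at hA
  have h0 := ENNReal.iSup_eq_zero.1 (ENNReal.iSup_eq_zero.1 hA r) hr
  simpa only [iInf_lt_iff, exists_prop] using h0.trans_lt hη

namespace Sigma2

def XG : Set Sigma2 := {x | ∀ k : ℕ, 1 ≤ k → xval x k * xval x (2 * k) = 0}

lemma xval_mul_xval (x : Sigma2) (k : ℕ) :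
    xval x k * xval x (2 * k) = if x (k - 1) = true ∧ x (2 * k - 1) = true then 1 else 0 := by
  unfold xval
  cases x (k - 1) <;> cases x (2 * k - 1) <;> simp

lemma mem_XG_iff {x : Sigma2} :
    x ∈ XG ↔ ∀ k : ℕ, 1 ≤ k → ¬(x (k - 1) = true ∧ x (2 * k - 1) = true) := by
  simp only [XG, Set.mem_ofPred_eq, xval_mul_xval, ite_eq_right_iff, one_ne_zero, imp_false]

lemma sum_xval_mul_xval (x : Sigma2) (n : ℕ) :
    ∑ k ∈ Finset.Icc 1 n, xval x k * xval x (2 * k) = Nij x true true n := by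
  simp only [xval_mul_xval, Nij, Finset.card_filter, Nat.cast_sum, Nat.cast_ite, Nat.cast_one,
    Nat.cast_zero]

lemma XG_subset_Aset_zero : XG ⊆ Aset 0 := fun x hx => by
  have hsum (n : ℕ) : ∑ k ∈ Finset.Icc 1 n, xval x k * xval x (2 * k) = 0 :=
    Finset.sum_eq_zero fun k hk => hx k (Finset.mem_Icc.1 hk).1
  simpa only [Aset, Set.mem_ofPred_eq, hsum, zero_div] using tendsto_const_nhds

lemma eventually_Nij_mul_two_pow_le {x : Sigma2} (hx : x ∈ Aset 0) (p : ℕ) :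
    ∀ᶠ n in atTop, Nij x true true n * 2 ^ p ≤ n := by
  have hlim : Tendsto (fun n : ℕ => (Nij x true true n : ℝ) / n) atTop (nhds 0) := by
    simpa only [Aset, Set.mem_ofPred_eq, sum_xval_mul_xval] using hx
  filter_upwards [hlim.eventually_le_const (by positivity : (0 : ℝ) < (2 ^ p)⁻¹),
    eventually_gt_atTop 0] with n hn hpos
  have hpos' : (0 : ℝ) < n := by exact_mod_cast hpos
  rw [div_le_iff₀ hpos', ← div_eq_inv_mul, le_div_iff₀ (by positivity)] at hn
  exact_mod_cast hn

/-- Clears `x_{2k}` whenever `x_k = 1`: the digit `x_{2k}` sits at the odd position `j = 2k - 1`,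
and `x_k` at `j / 2`. -/
def toXG (x : Sigma2) : Sigma2 := fun j => if j % 2 = 1 ∧ x (j / 2) = true then false else x j

lemma eq_true_of_toXG_eq_true {x : Sigma2} {j : ℕ} (h : toXG x j = true) : x j = true := by
  unfold toXG at h
  split_ifs at h
  exact h

lemma toXG_mem_XG (x : Sigma2) : toXG x ∈ XG := by
  refine mem_XG_iff.2 fun k hk ⟨h₁, h₂⟩ => ?_
  have hodd : (2 * k - 1) % 2 = 1 := by omega
  have hhalf : (2 * k - 1) / 2 = k - 1 := by omega
  simp [toXG, hodd, hhalf, eq_true_of_toXG_eq_true h₁] at h₂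

def prefixDiff (x z : Sigma2) (n : ℕ) : Finset ℕ := (Finset.range n).filter fun j => x j ≠ z j

lemma card_prefixDiff_toXG_le (x : Sigma2) (n : ℕ) :
    #(prefixDiff x (toXG x) n) ≤ Nij x true true n := by
  have hdiff : ∀ j ∈ prefixDiff x (toXG x) n,
      j < n ∧ j % 2 = 1 ∧ x (j / 2) = true ∧ x j = true := by
    intro j hj
    rw [prefixDiff, Finset.mem_filter, Finset.mem_range, toXG] at hj
    split_ifs at hj with h
    · cases hxj : x j <;> simp_all
    · exact absurd rfl hj.2
  refine Finset.card_le_card_of_injOn (fun j => j / 2 + 1) (fun j hj => ?_)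
    (fun i hi j hj hij => ?_)
  · obtain ⟨hjn, hodd, hhalf, hxj⟩ := hdiff j hj
    have hk : 2 * (j / 2 + 1) - 1 = j := by omega
    simp only [Finset.coe_filter, Set.mem_ofPred_eq, Finset.mem_Icc, Nat.add_sub_cancel, hk]
    exact ⟨⟨by omega, by omega⟩, hhalf, hxj⟩
  · have := (hdiff i hi).2.1
    have := (hdiff j hj).2.1
    simp only at hij
    omega

def flipOn (S : Finset ℕ) (y : Sigma2) : Sigma2 := fun j => if j ∈ S then !y j else y j

lemma mem_cylinder_flipOn_prefixDiff {x y z : Sigma2} {n : ℕ} (hz : z ∈ PiNat.cylinder y n) :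
    x ∈ PiNat.cylinder (flipOn (prefixDiff x z n) y) n := by
  intro i hi
  have hmem : i ∈ prefixDiff x z n ↔ x i ≠ z i := by
    rw [prefixDiff, Finset.mem_filter, Finset.mem_range]
    exact and_iff_right hi
  rw [flipOn, ← hz i hi]
  split_ifs with h
  · cases hx : x i <;> cases hz' : z i <;> simp_all
  · exact not_not.1 (mt hmem.2 h)

def sparseSubsets (p n : ℕ) : Finset (Finset ℕ) :=
  (Finset.range n).powerset.filter fun S => #S * 2 ^ p ≤ n

def hammingExponent (p : ℕ) : ℝ≥0 := (p + 2) / 2 ^ p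

lemma card_sparseSubsets_le_sum_choose (p n : ℕ) :
    #(sparseSubsets p n) ≤ ∑ j ∈ Finset.range (n / 2 ^ p + 1), n.choose j := by
  calc #(sparseSubsets p n)
      ≤ #((Finset.range (n / 2 ^ p + 1)).biUnion fun j => (Finset.range n).powersetCard j) := by
        refine Finset.card_le_card fun S hS => ?_
        rw [sparseSubsets, Finset.mem_filter, Finset.mem_powerset] at hS
        refine Finset.mem_biUnion.2 ⟨#S, ?_, Finset.mem_powersetCard.2 ⟨hS.1, rfl⟩⟩
        exact Finset.mem_range_succ_iff.2 ((Nat.le_div_iff_mul_le (by positivity)).2 hS.2)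
    _ ≤ ∑ j ∈ Finset.range (n / 2 ^ p + 1), #((Finset.range n).powersetCard j) :=
        Finset.card_biUnion_le
    _ = ∑ j ∈ Finset.range (n / 2 ^ p + 1), n.choose j := by
        simp only [Finset.card_powersetCard, Finset.card_range]

lemma card_sparseSubsets_le (p n : ℕ) :
    (#(sparseSubsets p n) : ℝ) ≤ 2 ^ ((hammingExponent p : ℝ) * n) := by
  set t := n / 2 ^ p
  have h2p : (0 : ℝ) < 2 ^ p := by positivity
  have hpow : ((2 : ℝ) ^ p) ^ t ≤ 2 ^ ((p : ℝ) * n / 2 ^ p) := by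
    rw [← pow_mul, ← Real.rpow_natCast, mul_div_assoc]
    refine Real.rpow_le_rpow_of_exponent_le (by norm_num) ?_
    push_cast
    gcongr
    rw [le_div_iff₀ h2p]
    exact_mod_cast Nat.div_mul_le_self n (2 ^ p)
  have hexp : (1 + ((2 : ℝ) ^ p)⁻¹) ^ n ≤ 2 ^ (2 * n / (2 : ℝ) ^ p) := by
    have h2 : (1 : ℝ) ≤ 2 * Real.log 2 := by linarith [Real.log_two_gt_d9]
    calc (1 + ((2 : ℝ) ^ p)⁻¹) ^ n ≤ Real.exp (((2 : ℝ) ^ p)⁻¹) ^ n := by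
          gcongr
          linarith [Real.add_one_le_exp ((2 : ℝ) ^ p)⁻¹]
      _ = Real.exp (n / 2 ^ p) := by rw [← Real.exp_nat_mul, div_eq_mul_inv]
      _ ≤ Real.exp (Real.log 2 * (2 * n / 2 ^ p)) := by
          gcongr
          calc (n : ℝ) / 2 ^ p ≤ 2 * Real.log 2 * (n / 2 ^ p) :=
                le_mul_of_one_le_left (by positivity) h2
            _ = Real.log 2 * (2 * n / 2 ^ p) := by ring
      _ = 2 ^ (2 * n / (2 : ℝ) ^ p) := by rw [Real.rpow_def_of_pos (by norm_num)]
  calc (#(sparseSubsets p n) : ℝ) ≤ ∑ j ∈ Finset.range (t + 1), (n.choose j : ℝ) := by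
        exact_mod_cast card_sparseSubsets_le_sum_choose p n
    _ ≤ ((2 : ℝ) ^ p) ^ t * (1 + ((2 : ℝ) ^ p)⁻¹) ^ n :=
        sum_choose_le_pow_mul_one_add_inv_pow (one_le_pow₀ (by norm_num)) (Nat.div_le_self n _)
    _ ≤ 2 ^ ((p : ℝ) * n / 2 ^ p) * 2 ^ (2 * n / (2 : ℝ) ^ p) := by gcongr
    _ = 2 ^ ((hammingExponent p : ℝ) * n) := by
        rw [← Real.rpow_add (by norm_num), hammingExponent]
        push_cast
        ring_nf

lemma card_sparseSubsets_mul_rpow_le (p n : ℕ) (d : ℝ) :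
    (#(sparseSubsets p n) : ℝ≥0∞) * ((2⁻¹ : ℝ≥0∞) ^ n) ^ (d + hammingExponent p)
      ≤ ((2⁻¹ : ℝ≥0∞) ^ n) ^ d := by
  have hpos : (2 : ℝ≥0∞) ^ ((hammingExponent p : ℝ) * n) ≠ 0 := by positivity
  have hfin : (2 : ℝ≥0∞) ^ ((hammingExponent p : ℝ) * n) ≠ ∞ :=
    ENNReal.rpow_ne_top_of_nonneg (by positivity) ENNReal.ofNat_ne_top
  have hcard : (#(sparseSubsets p n) : ℝ≥0∞) ≤ 2 ^ ((hammingExponent p : ℝ) * n) := by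
    rw [← ENNReal.ofReal_natCast, ← ENNReal.ofReal_ofNat 2,
      ENNReal.ofReal_rpow_of_pos (by norm_num)]
    exact ENNReal.ofReal_le_ofReal (card_sparseSubsets_le p n)
  have hscale : ((2⁻¹ : ℝ≥0∞) ^ n) ^ (hammingExponent p : ℝ)
      = (2 ^ ((hammingExponent p : ℝ) * n))⁻¹ := by
    rw [← ENNReal.inv_pow, ENNReal.inv_rpow, ← ENNReal.rpow_natCast, ← ENNReal.rpow_mul, mul_comm]
  calc (#(sparseSubsets p n) : ℝ≥0∞) * ((2⁻¹ : ℝ≥0∞) ^ n) ^ (d + hammingExponent p)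
      = ((2⁻¹ : ℝ≥0∞) ^ n) ^ d
          * (#(sparseSubsets p n) * (2 ^ ((hammingExponent p : ℝ) * n))⁻¹) := by
        rw [ENNReal.rpow_add _ _ (pow_ne_zero _ (by norm_num)) (ENNReal.pow_ne_top (by norm_num)),
          hscale]
        ring
    _ ≤ ((2⁻¹ : ℝ≥0∞) ^ n) ^ d * 1 := by
        gcongr
        rwa [ENNReal.mul_inv_le_iff hpos hfin, one_mul]
    _ = ((2⁻¹ : ℝ≥0∞) ^ n) ^ d := mul_one _

lemma edist_le_inv_two_pow_iff {x y : Sigma2} {n : ℕ} :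
    edist x y ≤ 2⁻¹ ^ n ↔ x ∈ PiNat.cylinder y n := by
  rw [PiNat.mem_cylinder_iff_dist_le, edist_dist, ← ENNReal.ofReal_le_ofReal_iff (by positivity),
    ENNReal.ofReal_pow (by norm_num), one_div, ENNReal.ofReal_inv_of_pos (by norm_num),
    ENNReal.ofReal_ofNat]

lemma ediam_cylinder_le (x : Sigma2) (n : ℕ) : ediam (PiNat.cylinder x n) ≤ 2⁻¹ ^ n :=
  ediam_le fun _ ha _ hb => edist_le_inv_two_pow_iff.2 fun i hi => (ha i hi).trans (hb i hi).symm

lemma subset_cylinder_of_ediam_le {S : Set Sigma2} {y : Sigma2} (hy : y ∈ S) {n : ℕ}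
    (hS : ediam S ≤ 2⁻¹ ^ n) : S ⊆ PiNat.cylinder y n :=
  fun _ hz => edist_le_inv_two_pow_iff.1 ((edist_le_ediam_of_mem hz hy).trans hS)

lemma exists_cylinder_superset {S : Set Sigma2} {y : Sigma2} (hy : y ∈ S) {L N : ℕ}
    (hLN : L ≤ N) (hS : ediam S ≤ 2⁻¹ ^ L) :
    ∃ n, L ≤ n ∧ S ⊆ PiNat.cylinder y n ∧ (2⁻¹ : ℝ≥0∞) ^ n ≤ max (2 * ediam S) (2⁻¹ ^ N) := by
  classical
  let P : ℕ → Prop := fun k => ediam S ≤ 2⁻¹ ^ k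
  have hPL : P L := hS
  -- the finest scale up to `N` at which `S` fits in one cylinder
  set n := Nat.findGreatest P N
  have hn : P n := Nat.findGreatest_spec hLN hPL
  refine ⟨n, Nat.le_findGreatest hLN hPL, subset_cylinder_of_ediam_le hy hn, ?_⟩
  rcases (Nat.findGreatest_le (P := P) N).lt_or_eq with hlt | heq
  · have hgt : (2⁻¹ : ℝ≥0∞) ^ (n + 1) < ediam S :=
      not_le.1 (Nat.findGreatest_is_greatest (Nat.lt_succ_self n) hlt)
    refine le_max_of_le_left ?_
    calc (2⁻¹ : ℝ≥0∞) ^ n = 2 * 2⁻¹ ^ (n + 1) := by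
          rw [pow_succ, mul_comm, mul_assoc, ENNReal.inv_mul_cancel (by norm_num) (by norm_num),
            mul_one]
      _ ≤ 2 * ediam S := by gcongr
  · exact le_max_of_le_right (congrArg (fun k => (2⁻¹ : ℝ≥0∞) ^ k) heq).le

lemma exists_inv_two_pow_rpow_le {d : ℝ} (hd : 0 < d) (L : ℕ) {c : ℝ≥0∞} (hc : c ≠ 0) :
    ∃ N, L ≤ N ∧ ((2⁻¹ : ℝ≥0∞) ^ N) ^ d ≤ c := by
  have hlim : Tendsto (fun N : ℕ => ((2⁻¹ : ℝ≥0∞) ^ N) ^ d) atTop (nhds 0) := by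
    simpa only [ENNReal.zero_rpow_of_pos hd, Function.comp_def] using
      ((ENNReal.continuous_rpow_const (y := d)).tendsto 0).comp
        (ENNReal.tendsto_pow_atTop_nhds_zero_of_lt_one (by norm_num))
  exact ((eventually_ge_atTop L).and (hlim.eventually_le_const (pos_iff_ne_zero.2 hc))).exists

lemma exists_cylinder_superset_rpow_le {S : Set Sigma2} {d : ℝ} (hd : 0 < d) {L : ℕ}
    (hS : ediam S ≤ 2⁻¹ ^ L) {c : ℝ≥0∞} (hc : c ≠ 0) :
    ∃ y n, L ≤ n ∧ S ⊆ PiNat.cylinder y n ∧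
      ((2⁻¹ : ℝ≥0∞) ^ n) ^ d ≤ 2 ^ d * (⨆ _ : S.Nonempty, ediam S ^ d) + c := by
  obtain ⟨N, hLN, hN⟩ := exists_inv_two_pow_rpow_le hd L hc
  rcases S.eq_empty_or_nonempty with rfl | ⟨y, hy⟩
  · exact ⟨fun _ => false, N, hLN, Set.empty_subset _, hN.trans le_add_self⟩
  obtain ⟨n, hLn, hsub, hscale⟩ := exists_cylinder_superset hy hLN hS
  refine ⟨y, n, hLn, hsub, ?_⟩
  rw [iSup_pos ⟨y, hy⟩, ← ENNReal.mul_rpow_of_nonneg _ _ hd.le]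
  calc ((2⁻¹ : ℝ≥0∞) ^ n) ^ d ≤ (max (2 * ediam S) (2⁻¹ ^ N)) ^ d :=
        ENNReal.rpow_le_rpow hscale hd.le
    _ ≤ (2 * ediam S) ^ d + ((2⁻¹ : ℝ≥0∞) ^ N) ^ d := by
        rcases max_choice (2 * ediam S) (2⁻¹ ^ N) with h | h <;> rw [h]
        exacts [le_self_add, le_add_self]
    _ ≤ (2 * ediam S) ^ d + c := by gcongr

lemma exists_cylinder_cover_of_hausdorffMeasure_eq_zero {A : Set Sigma2} {d : ℝ} (hd : 0 < d)
    (hA : μH[d] A = 0) (L : ℕ) {ε : ℝ≥0∞} (hε : ε ≠ 0) :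
    ∃ (y : ℕ → Sigma2) (n : ℕ → ℕ), (∀ i, L ≤ n i) ∧ A ⊆ ⋃ i, PiNat.cylinder (y i) (n i) ∧
      ∑' i, ((2⁻¹ : ℝ≥0∞) ^ n i) ^ d ≤ ε := by
  have h2d : (2 : ℝ≥0∞) ^ d ≠ ∞ := ENNReal.rpow_ne_top_of_nonneg hd.le ENNReal.ofNat_ne_top
  set η := ((2 : ℝ≥0∞) ^ d)⁻¹ * (ε / 2)
  have hη : 0 < η := ENNReal.mul_pos (ENNReal.inv_ne_zero.2 h2d) (ENNReal.half_pos hε).ne'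
  obtain ⟨t, hAt, hdiam, hsum⟩ :=
    exists_cover_tsum_lt_of_hausdorffMeasure_eq_zero hA
      (ENNReal.pow_pos (by norm_num : (0 : ℝ≥0∞) < 2⁻¹) L) hη
  obtain ⟨c, hc, hcsum⟩ := ENNReal.exists_pos_sum_of_countable' (ENNReal.half_pos hε).ne' ℕ
  choose y n hLn hsub hle using fun i => exists_cylinder_superset_rpow_le hd (hdiam i) (hc i).ne'
  refine ⟨y, n, hLn, hAt.trans (Set.iUnion_mono hsub), ?_⟩
  calc ∑' i, ((2⁻¹ : ℝ≥0∞) ^ n i) ^ d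
      ≤ ∑' i, (2 ^ d * (⨆ _ : (t i).Nonempty, ediam (t i) ^ d) + c i) := ENNReal.tsum_le_tsum hle
    _ = 2 ^ d * ∑' i, (⨆ _ : (t i).Nonempty, ediam (t i) ^ d) + ∑' i, c i := by
        rw [ENNReal.tsum_add, ENNReal.tsum_mul_left]
    _ ≤ 2 ^ d * η + ε / 2 := by gcongr
    _ = ε := by rw [ENNReal.mul_inv_cancel_left (by positivity) h2d, ENNReal.add_halves]

lemma subset_iUnion_cylinder_flipOn {E F : Set Sigma2} {p m : ℕ}
    (hEF : ∀ x ∈ E, ∃ z ∈ F, ∀ n, m ≤ n → #(prefixDiff x z n) * 2 ^ p ≤ n)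
    {y : ℕ → Sigma2} {n : ℕ → ℕ} (hn : ∀ i, m ≤ n i) (hF : F ⊆ ⋃ i, PiNat.cylinder (y i) (n i)) :
    E ⊆ ⋃ z : (i : ℕ) × sparseSubsets p (n i), PiNat.cylinder (flipOn z.2 (y z.1)) (n z.1) := by
  intro x hx
  obtain ⟨z, hzF, hxz⟩ := hEF x hx
  obtain ⟨i, hi⟩ := Set.mem_iUnion.1 (hF hzF)
  have hS : prefixDiff x z (n i) ∈ sparseSubsets p (n i) :=
    Finset.mem_filter.2 ⟨Finset.mem_powerset.2 (Finset.filter_subset _ _), hxz _ (hn i)⟩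
  exact Set.mem_iUnion.2 ⟨⟨i, _, hS⟩, mem_cylinder_flipOn_prefixDiff hi⟩

lemma tsum_ediam_cylinder_flipOn_rpow_le (p : ℕ) (y : ℕ → Sigma2) (n : ℕ → ℕ) {d : ℝ}
    (hd : 0 ≤ d) :
    ∑' z : (i : ℕ) × sparseSubsets p (n i),
        ediam (PiNat.cylinder (flipOn z.2 (y z.1)) (n z.1)) ^ (d + hammingExponent p)
      ≤ ∑' i, ((2⁻¹ : ℝ≥0∞) ^ n i) ^ d := by
  rw [ENNReal.tsum_sigma']
  refine ENNReal.tsum_le_tsum fun i => ?_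
  calc ∑' S : sparseSubsets p (n i),
        ediam (PiNat.cylinder (flipOn S (y i)) (n i)) ^ (d + hammingExponent p)
      ≤ ∑' _ : sparseSubsets p (n i), ((2⁻¹ : ℝ≥0∞) ^ n i) ^ (d + hammingExponent p) :=
        ENNReal.tsum_le_tsum fun S => ENNReal.rpow_le_rpow (ediam_cylinder_le _ _) (by positivity)
    _ = #(sparseSubsets p (n i)) * ((2⁻¹ : ℝ≥0∞) ^ n i) ^ (d + hammingExponent p) := by
        rw [Finset.tsum_subtype (sparseSubsets p (n i)) fun _ => _, Finset.sum_const, nsmul_eq_mul]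
    _ ≤ ((2⁻¹ : ℝ≥0∞) ^ n i) ^ d := card_sparseSubsets_mul_rpow_le p (n i) d

lemma hausdorffMeasure_add_hammingExponent_eq_zero {E F : Set Sigma2} {p m : ℕ} {d : ℝ}
    (hd : 0 < d) (hF : μH[d] F = 0)
    (hEF : ∀ x ∈ E, ∃ z ∈ F, ∀ n, m ≤ n → #(prefixDiff x z n) * 2 ^ p ≤ n) :
    μH[d + hammingExponent p] E = 0 := by
  refine le_antisymm (ENNReal.le_of_forall_pos_le_add fun ε hε _ => ?_) zero_le
  rw [zero_add]
  choose y n hn hcov hsum using fun L : ℕ =>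
    exists_cylinder_cover_of_hausdorffMeasure_eq_zero hd hF (max L m) (ENNReal.coe_ne_zero.2 hε.ne')
  calc μH[d + hammingExponent p] E
      ≤ liminf (fun L => ∑' z : (i : ℕ) × sparseSubsets p (n L i),
          ediam (PiNat.cylinder (flipOn z.2 (y L z.1)) (n L z.1)) ^ (d + hammingExponent p))
          atTop :=
        Measure.hausdorffMeasure_le_liminf_tsum _ _ (fun L => 2⁻¹ ^ L)
          (ENNReal.tendsto_pow_atTop_nhds_zero_of_lt_one (by norm_num)) _
          (Eventually.of_forall fun L z => (ediam_cylinder_le _ _).trans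
            (pow_le_pow_right_of_le_one' (by norm_num) ((le_max_left _ _).trans (hn L z.1))))
          (Eventually.of_forall fun L => subset_iUnion_cylinder_flipOn hEF
            (fun i => (le_max_right _ _).trans (hn L i)) (hcov L))
    _ ≤ ε := liminf_le_of_frequently_le' (Frequently.of_forall fun L =>
        (tsum_ediam_cylinder_flipOn_rpow_le p (y L) (n L) hd.le).trans (hsum L))

lemma dimH_le_add_hammingExponent {E F : Set Sigma2} (p : ℕ)
    (hEF : ∀ x ∈ E, ∃ z ∈ F, ∀ᶠ n in atTop, #(prefixDiff x z n) * 2 ^ p ≤ n) :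
    dimH E ≤ dimH F + hammingExponent p := by
  have hE : E ⊆ ⋃ m : ℕ, {x ∈ E | ∃ z ∈ F, ∀ n, m ≤ n → #(prefixDiff x z n) * 2 ^ p ≤ n} :=
    fun x hx => by
      obtain ⟨z, hz, hev⟩ := hEF x hx
      obtain ⟨m, hm⟩ := eventually_atTop.1 hev
      exact Set.mem_iUnion.2 ⟨m, hx, z, hz, hm⟩
  refine (dimH_mono hE).trans ((dimH_iUnion _).trans_le (iSup_le fun m => ?_))
  rw [← tsub_le_iff_right]
  refine le_of_forall_gt_imp_ge_of_dense fun c hc => ?_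
  obtain ⟨d, hd, hdc⟩ := ENNReal.lt_iff_exists_nnreal_btwn.1 hc
  refine le_trans ?_ hdc.le
  rw [tsub_le_iff_right, ← ENNReal.coe_add]
  refine dimH_le_of_hausdorffMeasure_ne_top ?_
  rw [NNReal.coe_add, hausdorffMeasure_add_hammingExponent_eq_zero
    (NNReal.coe_pos.2 (ENNReal.coe_pos.1 (zero_le.trans_lt hd)))
    (hausdorffMeasure_of_dimH_lt hd) fun x hx => hx.2]
  exact ENNReal.zero_ne_top

lemma tendsto_hammingExponent : Tendsto hammingExponent atTop (nhds 0) := by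
  rw [← NNReal.tendsto_coe, NNReal.coe_zero]
  have hpow := tendsto_inv_atTop_zero.comp
    (tendsto_pow_atTop_atTop_of_one_lt (one_lt_two : (1 : ℝ) < 2))
  convert (tendsto_pow_const_div_const_pow_of_one_lt 1 one_lt_two).add (hpow.const_mul 2)
    using 2 with p
  · simp only [hammingExponent, NNReal.coe_div, NNReal.coe_add, NNReal.coe_natCast,
      NNReal.coe_ofNat, NNReal.coe_pow, Function.comp_apply]
    ring
  · simp

lemma dimH_Aset_zero_le : dimH (Aset 0) ≤ dimH XG := by
  have hlim : Tendsto (fun p => dimH XG + hammingExponent p) atTop (nhds (dimH XG)) := by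
    simpa using tendsto_const_nhds.add (ENNReal.tendsto_coe.2 tendsto_hammingExponent)
  refine ge_of_tendsto' hlim fun p => dimH_le_add_hammingExponent p fun x hx =>
    ⟨toXG x, toXG_mem_XG x, ?_⟩
  filter_upwards [eventually_Nij_mul_two_pow_le hx p] with n hn
  exact (Nat.mul_le_mul_right _ (card_prefixDiff_toXG_le x n)).trans hn

end Sigma2

/-- `X_G = {(x_k) ∈ Σ₂ : x_k x_{2k} = 0 for all k ≥ 1}` satisfies `X_G ⊆ A_0` and
`dim_H(X_G) = dim_H(A_0)`. -/
theorem XG_subset_and_dimH_eq :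
    {x : Sigma2 | ∀ k : ℕ, 1 ≤ k → xval x k * xval x (2 * k) = 0} ⊆ Aset 0 ∧
    dimH {x : Sigma2 | ∀ k : ℕ, 1 ≤ k → xval x k * xval x (2 * k) = 0} = dimH (Aset 0) :=
  ⟨Sigma2.XG_subset_Aset_zero,
    le_antisymm (dimH_mono Sigma2.XG_subset_Aset_zero) Sigma2.dimH_Aset_zero_le⟩
end
end

section
/- Let p ∈ (0,1) and q ∈ [0,1]. Then for ℙ_μ-almost every x ∈ Σ₂, the frequencies α_n(x) := N_1(x_{n/2+1}^n)/(n/2) (defined for even n, where N_1(x_m^n) = #{k ∈ [m,n] : x_k = 1}) satisfy lim_{n→∞, n even} α_n(x) = 2p/(1+p+q). -/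
open Filter MeasureTheory Real Set

noncomputable section

/-!
Under `ℙ_μ` the digits along each progression `J(i)`, `i` odd, form an independent copy of the
Markov chain `μ`, so `x_k` is the state of a chain started from `π` at time `ν₂(k)`. Two digits
`x_k, x_l` with `m < k < l ≤ 2m` lie on different progressions, hence are independent; the count
`S_m = N_1(x_{m+1}^{2m})` therefore has variance at most `m / 4`. Chebyshev's inequality and
Borel–Cantelli along `m = j ^ 2` give `(S_m - 𝔼 S_m) / m → 0` almost surely along the squares,
and since `S_m` moves by at most `2` per step this extends to all `m`. Finally
`ℙ(x_k = 1) = c + (p - c) λ ^ ν₂(k)` with `c = p / (p + q)`, `λ = 1 - p - q`, and the recursion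
`A(2N) = N + λ A(N)` for `A(N) = ∑_{k ≤ N} λ ^ ν₂(k)` gives `A(N) = N / (2 - λ) + O(log N)`, so
`𝔼 S_m / m → c + (p - c) / (2 - λ) = 2p / (1 + p + q)`.
-/

open Topology

/-! ### Subsequences, Borel–Cantelli and Chebyshev -/

theorem tendsto_natSqrt_atTop : Tendsto Nat.sqrt atTop atTop :=
  tendsto_atTop_atTop.2 fun b => ⟨b ^ 2, fun _ hn => Nat.le_sqrt'.2 hn⟩

theorem tendsto_sub_sqrt_sq_div :
    Tendsto (fun n : ℕ => ((n : ℝ) - (Nat.sqrt n ^ 2 : ℕ)) / n) atTop (𝓝 0) := by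
  refine squeeze_zero' (Eventually.of_forall fun n => div_nonneg ?_ n.cast_nonneg) ?_
    ((tendsto_const_div_atTop_nhds_zero_nat 2).comp tendsto_natSqrt_atTop)
  · exact sub_nonneg.2 (by exact_mod_cast Nat.sqrt_le' n)
  filter_upwards [eventually_ge_atTop 1] with n hn
  have hs : 1 ≤ Nat.sqrt n := Nat.le_sqrt.2 (by simpa using hn)
  have hlo : (Nat.sqrt n : ℝ) ^ 2 ≤ n := by exact_mod_cast Nat.sqrt_le' n
  have hhi : (n : ℝ) ≤ Nat.sqrt n ^ 2 + 2 * Nat.sqrt n := by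
    have := Nat.lt_succ_sqrt' n
    exact_mod_cast (by nlinarith : n ≤ Nat.sqrt n ^ 2 + 2 * Nat.sqrt n)
  have hs' : (1 : ℝ) ≤ Nat.sqrt n := by exact_mod_cast hs
  rw [Function.comp_apply, div_le_div_iff₀ (by positivity) (by positivity)]
  push_cast
  nlinarith

/-- With `s = ⌊√n⌋`, `f n / n = f (s ^ 2) / s ^ 2 * (s ^ 2 / n) + (f n - f (s ^ 2)) / n`, and both
corrections are controlled by the gap `n - s ^ 2 = O(√n)`. -/
theorem tendsto_div_of_tendsto_div_sq {f : ℕ → ℝ} {C θ : ℝ}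
    (hf : ∀ m n, m ≤ n → |f n - f m| ≤ C * ((n : ℝ) - m))
    (h : Tendsto (fun j => f (j ^ 2) / (j ^ 2 : ℕ)) atTop (𝓝 θ)) :
    Tendsto (fun n => f n / n) atTop (𝓝 θ) := by
  have hratio : Tendsto (fun n : ℕ => ((Nat.sqrt n ^ 2 : ℕ) : ℝ) / n) atTop (𝓝 1) := by
    refine (by simpa using tendsto_sub_sqrt_sq_div.const_sub 1 :
      Tendsto (fun n : ℕ => 1 - ((n : ℝ) - (Nat.sqrt n ^ 2 : ℕ)) / n) atTop (𝓝 1)).congr' ?_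
    filter_upwards [eventually_ge_atTop 1] with n hn
    field_simp
    ring
  have hgap : Tendsto (fun n : ℕ => (f n - f (Nat.sqrt n ^ 2)) / n) atTop (𝓝 0) := by
    refine squeeze_zero_norm' ?_ (by simpa using tendsto_sub_sqrt_sq_div.const_mul C)
    filter_upwards [eventually_ge_atTop 1] with n hn
    rw [norm_div, Real.norm_natCast, Real.norm_eq_abs, mul_div_assoc']
    gcongr
    simpa using hf _ n (Nat.sqrt_le' n)
  have key := ((h.comp tendsto_natSqrt_atTop).mul hratio).add hgap
  rw [mul_one, add_zero] at key
  refine key.congr' ?_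
  filter_upwards [eventually_ge_atTop 1] with n hn
  have hs : ((Nat.sqrt n ^ 2 : ℕ) : ℝ) ≠ 0 := by
    have : 1 ≤ Nat.sqrt n := Nat.le_sqrt.2 (by simpa using hn)
    positivity
  simp only [Function.comp_apply]
  field_simp
  ring

theorem ae_tendsto_zero_of_tsum_measure_ne_top {Ω : Type*} [MeasurableSpace Ω] {μ : Measure Ω}
    {Y : ℕ → Ω → ℝ} (h : ∀ ε > 0, ∑' n, μ {x | ε ≤ |Y n x|} ≠ ⊤) :
    ∀ᵐ x ∂μ, Tendsto (fun n => Y n x) atTop (𝓝 0) := by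
  have hsmall : ∀ c : ℕ, ∀ᵐ x ∂μ, ∀ᶠ n in atTop, |Y n x| < 1 / ((c : ℝ) + 1) := fun c => by
    filter_upwards [ae_eventually_notMem (h _ Nat.one_div_pos_of_nat)] with x hx
    simpa using hx
  filter_upwards [ae_all_iff.2 hsmall] with x hx
  refine Metric.tendsto_nhds.2 fun ε hε => ?_
  obtain ⟨c, hc⟩ := exists_nat_one_div_lt hε
  filter_upwards [hx c] with n hn
  rw [Real.dist_0_eq_abs]
  exact hn.trans hc

theorem summable_one_div_mul_sq (c : ℝ) : Summable fun j : ℕ => 1 / (c * ((j ^ 2 : ℕ) : ℝ)) :=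
  ((Real.summable_one_div_nat_pow.2 one_lt_two).mul_left (1 / c)).congr fun j => by
    rw [one_div_mul_one_div, Nat.cast_pow]

theorem sum_filter_le_sum_mul_sq_div {ι : Type*} (s : Finset ι) {w g : ι → ℝ}
    (hw : ∀ i ∈ s, 0 ≤ w i) {ε : ℝ} (hε : 0 < ε) :
    ∑ i ∈ s with ε ≤ |g i|, w i ≤ (∑ i ∈ s, w i * g i ^ 2) / ε ^ 2 := by
  rw [le_div_iff₀ (by positivity), Finset.sum_mul]
  calc ∑ i ∈ s with ε ≤ |g i|, w i * ε ^ 2 ≤ ∑ i ∈ s with ε ≤ |g i|, w i * g i ^ 2 := by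
        refine Finset.sum_le_sum fun i hi => ?_
        rw [Finset.mem_filter] at hi
        rw [← sq_abs (g i)]
        exact mul_le_mul_of_nonneg_left (pow_le_pow_left₀ hε.le hi.2 2) (hw i hi.1)
    _ ≤ ∑ i ∈ s, w i * g i ^ 2 :=
        Finset.sum_le_sum_of_subset_of_nonneg (Finset.filter_subset _ _) fun i hi _ =>
          mul_nonneg (hw i hi) (sq_nonneg _)

/-! ### Sums over 2-adic valuations -/

theorem padicValNat_two_mul {k : ℕ} (hk : k ≠ 0) :
    padicValNat 2 (2 * k) = padicValNat 2 k + 1 := by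
  rw [padicValNat.mul two_ne_zero hk, padicValNat_self, add_comm]

theorem padicValNat_two_pow_mul_odd {i : ℕ} (hi : Odd i) (r : ℕ) :
    padicValNat 2 (2 ^ r * i) = r := by
  rw [padicValNat.mul (by positivity) hi.pos.ne', padicValNat.prime_pow,
    padicValNat.eq_zero_of_not_dvd hi.not_two_dvd_nat, add_zero]

theorem eq_of_two_pow_mul_eq {r t i j : ℕ} (hi : Odd i) (hj : Odd j) (h : 2 ^ r * i = 2 ^ t * j) :
    i = j := by
  have hrt : r = t := by
    simpa [padicValNat_two_pow_mul_odd hi, padicValNat_two_pow_mul_odd hj] using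
      congrArg (padicValNat 2) h
  subst hrt
  exact Nat.eq_of_mul_eq_mul_left (by positivity) h

theorem tendsto_natLog_add_one_div :
    Tendsto (fun N : ℕ => ((Nat.log 2 N : ℝ) + 1) / N) atTop (𝓝 0) := by
  have hlog : Tendsto (fun N : ℕ => Real.log N / N) atTop (𝓝 0) :=
    Real.isLittleO_log_id_atTop.tendsto_div_nhds_zero.comp tendsto_natCast_atTop_atTop
  have hbound := (hlog.div_const (Real.log 2)).add tendsto_one_div_atTop_nhds_zero_nat
  rw [zero_div, zero_add] at hbound
  refine squeeze_zero (fun N => by positivity) (fun N => ?_) hbound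
  have h := natLog_le_logb N 2
  rw [Real.logb, Nat.cast_ofNat] at h
  rw [add_div, div_right_comm]
  gcongr

def powValSum (r : ℝ) (N : ℕ) : ℝ := ∑ k ∈ Finset.Ioc 0 N, r ^ padicValNat 2 k

theorem powValSum_succ (r : ℝ) (N : ℕ) :
    powValSum r (N + 1) = powValSum r N + r ^ padicValNat 2 (N + 1) :=
  Finset.sum_Ioc_succ_top (Nat.zero_le N) _

theorem powValSum_two_mul (r : ℝ) (N : ℕ) : powValSum r (2 * N) = N + r * powValSum r N := by
  induction N with
  | zero => simp [powValSum]
  | succ N ih =>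
    rw [show 2 * (N + 1) = 2 * N + 1 + 1 by ring, powValSum_succ, powValSum_succ, ih,
      powValSum_succ, show 2 * N + 1 + 1 = 2 * (N + 1) by ring,
      padicValNat_two_mul N.succ_ne_zero,
      padicValNat.eq_zero_of_not_dvd (by omega : ¬ 2 ∣ 2 * N + 1)]
    push_cast
    ring

theorem powValSum_sub_eq {r : ℝ} (hr : r ≠ 2) (N : ℕ) :
    powValSum r N - N / (2 - r) =
      r * (powValSum r (N / 2) - (N / 2 : ℕ) / (2 - r)) + (N % 2 : ℕ) * (1 - 1 / (2 - r)) := by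
  have h2r : 2 - r ≠ 0 := sub_ne_zero.2 (Ne.symm hr)
  obtain ⟨M, rfl | rfl⟩ := Nat.even_or_odd' N
  · rw [powValSum_two_mul, Nat.mul_div_cancel_left M two_pos, Nat.mul_mod_right]
    push_cast
    field_simp
    ring
  · rw [powValSum_succ, powValSum_two_mul,
      padicValNat.eq_zero_of_not_dvd (by omega : ¬ 2 ∣ 2 * M + 1),
      show (2 * M + 1) / 2 = M by omega, show (2 * M + 1) % 2 = 1 by omega]
    push_cast
    field_simp
    ring

theorem abs_powValSum_sub_le {r : ℝ} (hr : |r| ≤ 1) (N : ℕ) :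
    |powValSum r N - N / (2 - r)| ≤ Nat.log 2 N + 1 := by
  have h2r : 1 ≤ 2 - r := by linarith [(abs_le.1 hr).2]
  have hc : |1 - 1 / (2 - r)| ≤ 1 := by
    have : 1 / (2 - r) ≤ 1 := (div_le_one (by linarith)).2 h2r
    rw [abs_le]
    constructor <;> linarith [one_div_pos.2 (by linarith : 0 < 2 - r)]
  induction N using Nat.strong_induction_on with
  | _ N ih =>
    have hstep : |powValSum r N - N / (2 - r)|
        ≤ |powValSum r (N / 2) - (N / 2 : ℕ) / (2 - r)| + 1 := by
      rw [powValSum_sub_eq (by linarith) N]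
      refine (abs_add_le _ _).trans (add_le_add ?_ ?_)
      · rw [abs_mul]
        exact mul_le_of_le_one_left (abs_nonneg _) hr
      · rw [abs_mul, Nat.abs_cast]
        exact mul_le_one₀ (by exact_mod_cast Nat.le_of_lt_succ (Nat.mod_lt N two_pos))
          (abs_nonneg _) hc
    rcases lt_or_ge N 2 with hN | hN
    · have : N / 2 = 0 := Nat.div_eq_of_lt hN
      have h0 : powValSum r 0 = 0 := by simp [powValSum]
      rw [this, h0, Nat.cast_zero, zero_div, sub_zero, abs_zero, zero_add] at hstep
      linarith [(Nat.log 2 N).cast_nonneg (α := ℝ)]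
    · rw [Nat.log_of_one_lt_of_le one_lt_two hN]
      push_cast
      linarith [ih (N / 2) (by omega)]

theorem tendsto_powValSum_div {r : ℝ} (hr : |r| ≤ 1) :
    Tendsto (fun N : ℕ => powValSum r N / N) atTop (𝓝 (1 / (2 - r))) := by
  rw [tendsto_iff_norm_sub_tendsto_zero]
  refine squeeze_zero_norm' ?_ tendsto_natLog_add_one_div
  filter_upwards [eventually_ge_atTop 1] with N hN
  have hN' : (0 : ℝ) < N := by exact_mod_cast hN
  have h2r : (2 : ℝ) - r ≠ 0 := by linarith [(abs_le.1 hr).2]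
  rw [norm_norm, Real.norm_eq_abs,
    show powValSum r N / N - 1 / (2 - r) = (powValSum r N - N / (2 - r)) / N by field_simp,
    abs_div, Nat.abs_cast]
  gcongr
  exact abs_powValSum_sub_le hr N

theorem tendsto_sum_Ioc_pow_padicValNat_div {r : ℝ} (hr : |r| ≤ 1) :
    Tendsto (fun m : ℕ => (∑ k ∈ Finset.Ioc m (2 * m), r ^ padicValNat 2 k) / m) atTop
      (𝓝 (1 / (2 - r))) := by
  have h2r : (2 : ℝ) - r ≠ 0 := by linarith [(abs_le.1 hr).2]
  have key := ((tendsto_powValSum_div hr).const_mul (r - 1)).const_add 1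
  rw [show 1 + (r - 1) * (1 / (2 - r)) = 1 / (2 - r) by field_simp; ring] at key
  refine key.congr' ?_
  filter_upwards [eventually_ge_atTop 1] with m hm
  have hsplit := Finset.sum_Ioc_consecutive (fun k => r ^ padicValNat 2 k) (Nat.zero_le m)
    (by omega : m ≤ 2 * m)
  rw [← powValSum, ← powValSum, powValSum_two_mul] at hsplit
  have hm' : (m : ℝ) ≠ 0 := by positivity
  rw [← sub_eq_iff_eq_add'.2 hsplit.symm]
  field_simp
  ring

/-- The chain `μ` started from `π` is in state `1` at time `r` with probability
`probOneAt p q r`; under `ℙ_μ` this is the law of the digit `x_k` for `r = ν₂(k)`. -/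
def probOneAt (p q : ℝ) : ℕ → ℝ
  | 0 => p
  | r + 1 => p + (1 - p - q) * probOneAt p q r

theorem probOneAt_eq {p q : ℝ} (hpq : p + q ≠ 0) (r : ℕ) :
    probOneAt p q r = p / (p + q) + (p - p / (p + q)) * (1 - p - q) ^ r := by
  induction r with
  | zero => simp [probOneAt]
  | succ r ih =>
    rw [probOneAt, ih]
    field_simp
    ring

/-- The expected number of ones among the digits `x_{m+1}, …, x_{2m}`. -/
def halfMean (p q : ℝ) (m : ℕ) : ℝ :=
  ∑ k ∈ Finset.Ioc m (2 * m), probOneAt p q (padicValNat 2 k)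

theorem tendsto_halfMean_div {p q : ℝ} (hp : p ∈ Ioc (0 : ℝ) 1) (hq : q ∈ Icc (0 : ℝ) 1) :
    Tendsto (fun m => halfMean p q m / m) atTop (𝓝 (2 * p / (1 + p + q))) := by
  obtain ⟨hp0, hp1⟩ := hp
  obtain ⟨hq0, hq1⟩ := hq
  have hpq : p + q ≠ 0 := by positivity
  have hr : |1 - p - q| ≤ 1 := abs_le.2 ⟨by linarith, by linarith⟩
  have h1pq : (1 : ℝ) + p + q ≠ 0 := by positivity
  have key := ((tendsto_sum_Ioc_pow_padicValNat_div hr).const_mul (p - p / (p + q))).const_add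
    (p / (p + q))
  rw [show 2 - (1 - p - q) = 1 + p + q by ring,
    show p / (p + q) + (p - p / (p + q)) * (1 / (1 + p + q)) = 2 * p / (1 + p + q) by
      field_simp; ring] at key
  refine key.congr' ?_
  filter_upwards [eventually_ge_atTop 1] with m hm
  have hm' : (m : ℝ) ≠ 0 := by positivity
  simp only [halfMean, probOneAt_eq hpq, Finset.sum_add_distrib, Finset.sum_const, Nat.card_Ioc,
    nsmul_eq_mul, ← Finset.mul_sum]
  rw [show 2 * m - m = m by omega]
  field_simp

/-! ### The weights `ℙ_μ[u]` under appending a digit -/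

def wordsOfLength : ℕ → Finset (List Bool)
  | 0 => {[]}
  | n + 1 => (wordsOfLength n ×ˢ Finset.univ).image fun ub => ub.1 ++ [ub.2]

theorem mem_wordsOfLength {n : ℕ} {u : List Bool} : u ∈ wordsOfLength n ↔ u.length = n := by
  induction n generalizing u with
  | zero => simp [wordsOfLength]
  | succ n ih =>
    simp only [wordsOfLength, Finset.mem_image, Finset.mem_product, Finset.mem_univ, and_true,
      Prod.exists, ih]
    constructor
    · rintro ⟨v, b, rfl, rfl⟩
      simp
    · intro hu
      rcases List.eq_nil_or_concat u with rfl | ⟨v, b, rfl⟩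
      · simp at hu
      · exact ⟨v, b, by simpa using hu, by simp⟩

theorem sum_wordsOfLength_succ {M : Type*} [AddCommMonoid M] (n : ℕ) (f : List Bool → M) :
    ∑ u ∈ wordsOfLength (n + 1), f u = ∑ u ∈ wordsOfLength n, ∑ b : Bool, f (u ++ [b]) := by
  rw [wordsOfLength, Finset.sum_image, Finset.sum_product]
  rintro ⟨v, b⟩ - ⟨v', b'⟩ - h
  simpa using h

def digit (u : List Bool) (k : ℕ) : ℝ := if u.getD (k - 1) false then 1 else 0

theorem digit_append_of_le {u : List Bool} {k : ℕ} (hk0 : k ≠ 0) (hk : k ≤ u.length)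
    (b : Bool) : digit (u ++ [b]) k = digit u k := by
  rw [digit, digit, List.getD_append _ _ _ _ (by omega)]

theorem digit_append_length_succ (u : List Bool) (b : Bool) :
    digit (u ++ [b]) (u.length + 1) = if b then 1 else 0 := by
  rw [digit, Nat.add_sub_cancel, List.getD_append_right _ _ _ _ le_rfl]
  simp

theorem subword_eq_map_range {u : List Bool} {i t : ℕ} (hi : 0 < i)
    (h : ∀ r, 2 ^ r * i ≤ u.length ↔ r < t) :
    subword u i = (List.range t).map fun r => u.getD (2 ^ r * i - 1) false := by
  have ht : t ≤ u.length + 1 := by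
    by_contra! ht
    have h1 := (h (u.length + 1)).2 ht
    have h2 : u.length + 1 < 2 ^ (u.length + 1) * i :=
      Nat.lt_two_pow_self.trans_le (Nat.le_mul_of_pos_right _ hi)
    omega
  obtain ⟨d, hd⟩ := Nat.exists_eq_add_of_le ht
  rw [subword, hd, List.range_add, List.filter_append, List.filter_eq_self.2,
    List.filter_eq_nil_iff.2, List.append_nil]
  · intro r hr
    obtain ⟨s, -, rfl⟩ := List.mem_map.1 hr
    simp [h]
  · intro r hr
    simpa [h] using hr

theorem exists_forall_two_pow_mul_le_iff (N : ℕ) {i : ℕ} (hi : 0 < i) :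
    ∃ t, ∀ r, 2 ^ r * i ≤ N ↔ r < t := by
  classical
  have hex : ∃ r, N < 2 ^ r * i := ⟨N, Nat.lt_two_pow_self.trans_le (Nat.le_mul_of_pos_right _ hi)⟩
  refine ⟨Nat.find hex, fun r => ⟨fun hr => ?_, fun hr => not_lt.1 (Nat.find_min hex hr)⟩⟩
  by_contra! h
  exact (Nat.find_spec hex).not_ge <|
    ((Nat.mul_le_mul_right_iff hi).2 (Nat.pow_le_pow_right two_pos h)).trans hr

theorem two_pow_mul_le_iff_of_eq {i t N : ℕ} (h : 2 ^ t * i = N + 1) (r : ℕ) :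
    2 ^ r * i ≤ N ↔ r < t := by
  have hi : 0 < i := Nat.pos_of_ne_zero (by rintro rfl; simp at h)
  rw [show 2 ^ r * i ≤ N ↔ 2 ^ r * i < 2 ^ t * i by omega, Nat.mul_lt_mul_right hi,
    Nat.pow_lt_pow_iff_right one_lt_two]

theorem subword_append_of_ne {u : List Bool} {i : ℕ} (hi : 0 < i)
    (h : ∀ r, 2 ^ r * i ≠ u.length + 1) (b : Bool) :
    subword (u ++ [b]) i = subword u i := by
  obtain ⟨t, ht⟩ := exists_forall_two_pow_mul_le_iff u.length hi
  have ht' : ∀ r, 2 ^ r * i ≤ (u ++ [b]).length ↔ r < t := fun r => by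
    rw [List.length_append, List.length_singleton, ← ht]
    have := h r
    omega
  rw [subword_eq_map_range hi ht, subword_eq_map_range hi ht']
  refine List.map_congr_left fun r hr => List.getD_append _ _ _ _ ?_
  have h1 := (ht r).2 (List.mem_range.1 hr)
  have h2 : 0 < 2 ^ r * i := by positivity
  omega

theorem subword_eq_map_range_of_eq {u : List Bool} {i t : ℕ} (h : 2 ^ t * i = u.length + 1) :
    subword u i = (List.range t).map fun r => u.getD (2 ^ r * i - 1) false :=
  subword_eq_map_range (Nat.pos_of_ne_zero (by rintro rfl; simp at h))
    (two_pow_mul_le_iff_of_eq h)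

theorem subword_append_of_eq {u : List Bool} {i t : ℕ} (h : 2 ^ t * i = u.length + 1)
    (b : Bool) : subword (u ++ [b]) i = subword u i ++ [b] := by
  have hi : 0 < i := Nat.pos_of_ne_zero (by rintro rfl; simp at h)
  have h' : ∀ r, 2 ^ r * i ≤ (u ++ [b]).length ↔ r < t + 1 := fun r => by
    rw [List.length_append, List.length_singleton, ← h, Nat.mul_le_mul_right_iff hi,
      Nat.pow_le_pow_iff_right one_lt_two, Nat.lt_succ_iff]
  rw [subword_eq_map_range hi h', subword_eq_map_range_of_eq h, List.range_succ,
    List.map_append, List.map_singleton, h, Nat.add_sub_cancel,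
    List.getD_append_right _ _ _ _ le_rfl, Nat.sub_self]
  congr 1
  refine List.map_congr_left fun r hr => List.getD_append _ _ _ _ ?_
  have h1 := (two_pow_mul_le_iff_of_eq h r).2 (List.mem_range.1 hr)
  have h2 : 0 < 2 ^ r * i := by positivity
  omega

theorem mweight_append (p q : ℝ) (w : List Bool) (b : Bool) :
    mweight p q (w ++ [b]) =
      mweight p q w * w.getLast?.elim (initProb p b) (transProb p q · b) := by
  rcases List.eq_nil_or_concat' w with rfl | ⟨v, a, rfl⟩
  · simp [mweight]
  set w := v ++ [a]
  have hlen : (w ++ [b]).length - 1 = v.length + 1 := by simp [w]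
  have hget : ∀ j ≤ v.length, (w ++ [b]).getD j false = w.getD j false := fun j hj =>
    List.getD_append w [b] false j (by simp [w]; omega)
  rw [mweight, if_neg (by simp), mweight, if_neg (by simp [w]), hlen,
    show w.length - 1 = v.length by simp [w], Finset.prod_range_succ, hget 0 (Nat.zero_le _),
    hget v.length le_rfl, Finset.prod_congr rfl fun j hj => by
      rw [hget j (by simp at hj; omega), hget (j + 1) (by simp at hj; omega)]]
  simp [w, mul_assoc]

theorem PmuWord_eq_prod_Icc_succ (p q : ℝ) (u : List Bool) :
    PmuWord p q u = ∏ i ∈ (Finset.Icc 1 (u.length + 1)).filter Odd, mweight p q (subword u i) := by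
  refine Finset.prod_subset (Finset.filter_subset_filter _ (Finset.Icc_subset_Icc_right
    (Nat.le_succ _))) fun i hi hni => ?_
  simp only [Finset.mem_filter, Finset.mem_Icc] at hi hni
  have hi : i = u.length + 1 := by
    have : ¬ i ≤ u.length := fun h => hni ⟨⟨hi.1.1, h⟩, hi.2⟩
    omega
  rw [hi, subword_eq_map_range (t := 0) (Nat.succ_pos _) fun r => by
    simpa using (Nat.lt_succ_self _).trans_le (Nat.le_mul_of_pos_left _ (Nat.two_pow_pos r))]
  simp [mweight]

/-- Appending a digit multiplies `ℙ_μ[u]` by one transition probability of `μ`: the new index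
`n + 1 = 2 ^ t i₀` (with `i₀` odd) lengthens only the chain `u|_{J(i₀)}`, whose last entry
is `u_{(n+1)/2}` when `t > 0`. -/
theorem PmuWord_append (p q : ℝ) (u : List Bool) (b : Bool) :
    PmuWord p q (u ++ [b]) = PmuWord p q u *
      if Odd (u.length + 1) then initProb p b
      else transProb p q (u.getD ((u.length + 1) / 2 - 1) false) b := by
  obtain ⟨t, i₀, hi₀, ht⟩ := Nat.exists_eq_two_pow_mul_odd (n := u.length + 1) (by omega)
  set S := (Finset.Icc 1 (u.length + 1)).filter Odd
  have hmem : i₀ ∈ S := by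
    simp only [S, Finset.mem_filter, Finset.mem_Icc, hi₀, and_true]
    exact ⟨hi₀.pos, ht ▸ Nat.le_mul_of_pos_left i₀ (Nat.two_pow_pos t)⟩
  have hrest : ∀ i ∈ S.erase i₀,
      mweight p q (subword (u ++ [b]) i) = mweight p q (subword u i) := by
    intro i hi
    simp only [S, Finset.mem_erase, Finset.mem_filter, Finset.mem_Icc] at hi
    rw [subword_append_of_ne hi.2.1.1 fun r hr =>
      hi.1 (eq_of_two_pow_mul_eq hi.2.2 hi₀ (hr.trans ht))]
  have hu : PmuWord p q (u ++ [b]) = ∏ i ∈ S, mweight p q (subword (u ++ [b]) i) := by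
    simp [PmuWord, S]
  rw [hu, PmuWord_eq_prod_Icc_succ, ← Finset.mul_prod_erase S _ hmem,
    ← Finset.mul_prod_erase S _ hmem, Finset.prod_congr rfl hrest, subword_append_of_eq ht.symm,
    mweight_append, subword_eq_map_range_of_eq ht.symm, List.getLast?_map, List.getLast?_range]
  rcases t with _ | t
  · rw [pow_zero, one_mul] at ht
    have hodd : Odd (u.length + 1) := by rw [ht]; exact hi₀
    rw [if_pos hodd, ← ht]
    simp [mul_right_comm]
  · have heven : ¬ Odd (u.length + 1) := by
      rw [ht, pow_succ, mul_right_comm, Nat.not_odd_iff_even]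
      exact ⟨2 ^ t * i₀, by ring⟩
    have hhalf : (u.length + 1) / 2 = 2 ^ t * i₀ := by
      rw [ht, pow_succ, mul_right_comm, Nat.mul_div_cancel _ two_pos]
    rw [if_neg heven, hhalf]
    simp [mul_right_comm]

section WordMoments

variable {p q : ℝ}

theorem sum_PmuWord_append (u : List Bool) : ∑ b, PmuWord p q (u ++ [b]) = PmuWord p q u := by
  rw [Fintype.sum_bool, PmuWord_append, PmuWord_append, ← mul_add]
  split_ifs
  · simp [initProb]
  · cases u.getD ((u.length + 1) / 2 - 1) false <;> simp [transProb]

theorem PmuWord_append_true_of_odd {u : List Bool} (h : Odd (u.length + 1)) :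
    PmuWord p q (u ++ [true]) = PmuWord p q u * p := by
  rw [PmuWord_append, if_pos h, initProb, if_pos rfl]

theorem PmuWord_append_true_of_eq_two_mul {u : List Bool} {k : ℕ} (h : u.length + 1 = 2 * k) :
    PmuWord p q (u ++ [true]) = PmuWord p q u * (p + (1 - p - q) * digit u k) := by
  rw [PmuWord_append, if_neg (by rw [h]; simp), h, Nat.mul_div_cancel_left k two_pos, digit]
  cases u.getD (k - 1) false <;> simp only [transProb, if_true, Bool.false_eq_true, if_false] <;>
    ring

theorem sum_PmuWord_wordsOfLength (n : ℕ) : ∑ u ∈ wordsOfLength n, PmuWord p q u = 1 := by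
  induction n with
  | zero => simp [wordsOfLength, PmuWord]
  | succ n ih => simp_rw [sum_wordsOfLength_succ, sum_PmuWord_append, ih]

theorem PmuWord_nonneg (hp : p ∈ Icc (0 : ℝ) 1) (hq : q ∈ Icc (0 : ℝ) 1) (u : List Bool) :
    0 ≤ PmuWord p q u := by
  obtain ⟨hp0, hp1⟩ := hp
  obtain ⟨hq0, hq1⟩ := hq
  have hinit : ∀ b, 0 ≤ initProb p b := by intro b; cases b <;> simp [initProb] <;> linarith
  have htrans : ∀ a b, 0 ≤ transProb p q a b := by
    intro a b; cases a <;> cases b <;> simp [transProb] <;> linarith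
  refine Finset.prod_nonneg fun i _ => ?_
  unfold mweight
  split_ifs
  · exact zero_le_one
  · exact mul_nonneg (hinit _) (Finset.prod_nonneg fun j _ => htrans _ _)

/-! ### Moments of the digits in the upper half of a word -/

theorem sum_wordsOfLength_succ_mul {n : ℕ} {f : List Bool → ℝ}
    (hf : ∀ u : List Bool, u.length = n → ∀ b, f (u ++ [b]) = f u) :
    ∑ u ∈ wordsOfLength (n + 1), PmuWord p q u * f u =
      ∑ u ∈ wordsOfLength n, PmuWord p q u * f u := by
  rw [sum_wordsOfLength_succ]
  refine Finset.sum_congr rfl fun u hu => ?_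
  simp_rw [hf u (mem_wordsOfLength.1 hu), ← Finset.sum_mul, sum_PmuWord_append]

theorem sum_wordsOfLength_succ_mul_digit {n : ℕ} {f : List Bool → ℝ}
    (hf : ∀ u : List Bool, u.length = n → ∀ b, f (u ++ [b]) = f u) :
    ∑ u ∈ wordsOfLength (n + 1), PmuWord p q u * (digit u (n + 1) * f u) =
      ∑ u ∈ wordsOfLength n, PmuWord p q (u ++ [true]) * f u := by
  rw [sum_wordsOfLength_succ]
  refine Finset.sum_congr rfl fun u hu => ?_
  rw [mem_wordsOfLength] at hu
  subst hu
  simp [digit_append_length_succ, hf u rfl]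

theorem sum_PmuWord_append_true_mul_of_odd {n : ℕ} (hn : Odd (n + 1)) (f : List Bool → ℝ) :
    ∑ u ∈ wordsOfLength n, PmuWord p q (u ++ [true]) * f u =
      p * ∑ u ∈ wordsOfLength n, PmuWord p q u * f u := by
  rw [Finset.mul_sum]
  refine Finset.sum_congr rfl fun u hu => ?_
  rw [PmuWord_append_true_of_odd (by rwa [mem_wordsOfLength.1 hu])]
  ring

theorem sum_PmuWord_append_true_mul_of_eq_two_mul {n j : ℕ} (hn : n + 1 = 2 * j)
    (f : List Bool → ℝ) :
    ∑ u ∈ wordsOfLength n, PmuWord p q (u ++ [true]) * f u =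
      p * ∑ u ∈ wordsOfLength n, PmuWord p q u * f u +
        (1 - p - q) * ∑ u ∈ wordsOfLength n, PmuWord p q u * (digit u j * f u) := by
  rw [Finset.mul_sum, Finset.mul_sum, ← Finset.sum_add_distrib]
  refine Finset.sum_congr rfl fun u hu => ?_
  rw [PmuWord_append_true_of_eq_two_mul (by rwa [mem_wordsOfLength.1 hu])]
  ring

theorem prod_digit_append {K : Finset ℕ} {u : List Bool} (hK : ∀ k ∈ K, k ≠ 0 ∧ k ≤ u.length)
    (b : Bool) : ∏ k ∈ K, digit (u ++ [b]) k = ∏ k ∈ K, digit u k :=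
  Finset.prod_congr rfl fun k hk => digit_append_of_le (hK k hk).1 (hK k hk).2 b

/-- The digits in the upper half `n / 2 < k ≤ n` of a word are independent: they lie on
distinct chains `J(i)`. -/
theorem sum_PmuWord_mul_prod_digit (n : ℕ) (K : Finset ℕ) (hK : ∀ k ∈ K, k ≤ n ∧ n < 2 * k) :
    ∑ u ∈ wordsOfLength n, PmuWord p q u * ∏ k ∈ K, digit u k =
      ∏ k ∈ K, probOneAt p q (padicValNat 2 k) := by
  induction n generalizing K with
  | zero =>
    obtain rfl : K = ∅ := Finset.eq_empty_of_forall_notMem fun k hk => by have := hK k hk; omega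
    simpa using sum_PmuWord_wordsOfLength 0
  | succ n ih =>
    have hfix : ∀ L : Finset ℕ, (∀ k ∈ L, k ≤ n ∧ n < 2 * k) → ∀ u : List Bool, u.length = n →
        ∀ b, ∏ k ∈ L, digit (u ++ [b]) k = ∏ k ∈ L, digit u k := fun L hL u hu =>
      prod_digit_append fun k hk => ⟨by have := hL k hk; omega, hu ▸ (hL k hk).1⟩
    by_cases hn : n + 1 ∈ K
    swap
    · have hK' : ∀ k ∈ K, k ≤ n ∧ n < 2 * k := fun k hk => by
        have := hK k hk; have : k ≠ n + 1 := fun h => hn (h ▸ hk); omega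
      rw [sum_wordsOfLength_succ_mul (hfix K hK'), ih K hK']
    obtain ⟨K', hnK', rfl⟩ : ∃ K', n + 1 ∉ K' ∧ K = insert (n + 1) K' :=
      ⟨K.erase (n + 1), Finset.notMem_erase _ _, (Finset.insert_erase hn).symm⟩
    have hK' : ∀ k ∈ K', k ≤ n ∧ n + 1 < 2 * k := fun k hk => by
      have := hK k (Finset.mem_insert_of_mem hk); have : k ≠ n + 1 := fun h => hnK' (h ▸ hk)
      omega
    have hK'n : ∀ k ∈ K', k ≤ n ∧ n < 2 * k := fun k hk =>
      ⟨(hK' k hk).1, by have := hK' k hk; omega⟩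
    simp_rw [Finset.prod_insert hnK']
    rw [sum_wordsOfLength_succ_mul_digit (hfix K' hK'n)]
    rcases Nat.even_or_odd' (n + 1) with ⟨j, hj | hj⟩
    · have hjK' : j ∉ K' := fun h => by have := hK' j h; omega
      have hjK : ∀ k ∈ insert j K', k ≤ n ∧ n < 2 * k := by
        simp only [Finset.forall_mem_insert]
        exact ⟨by omega, hK'n⟩
      have hval : padicValNat 2 (n + 1) = padicValNat 2 j + 1 := by
        rw [hj, padicValNat_two_mul (by omega)]
      simp_rw [sum_PmuWord_append_true_mul_of_eq_two_mul hj, ← Finset.prod_insert hjK']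
      rw [ih K' hK'n, ih _ hjK, Finset.prod_insert hjK', hval, probOneAt]
      ring
    · rw [sum_PmuWord_append_true_mul_of_odd (hj ▸ odd_two_mul_add_one j), ih K' hK'n,
        padicValNat.eq_zero_of_not_dvd (by omega : ¬ 2 ∣ n + 1), probOneAt]

theorem sum_PmuWord_mul_digit_mul_digit {n k l : ℕ} (hk : k ≤ n ∧ n < 2 * k)
    (hl : l ≤ n ∧ n < 2 * l) :
    ∑ u ∈ wordsOfLength n, PmuWord p q u * (digit u k * digit u l) =
      if k = l then probOneAt p q (padicValNat 2 k)
      else probOneAt p q (padicValNat 2 k) * probOneAt p q (padicValNat 2 l) := by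
  split_ifs with hkl
  · subst hkl
    have hsq : ∀ u, digit u k * digit u k = ∏ i ∈ {k}, digit u i := fun u => by
      rw [Finset.prod_singleton, digit]; split_ifs <;> norm_num
    simp_rw [hsq]
    simpa using sum_PmuWord_mul_prod_digit n {k} (by simpa using hk)
  · have hpair : ∀ u, digit u k * digit u l = ∏ i ∈ {k, l}, digit u i := fun u =>
      (Finset.prod_pair hkl).symm
    simp_rw [hpair, ← Finset.prod_pair (f := fun i => probOneAt p q (padicValNat 2 i)) hkl]
    exact sum_PmuWord_mul_prod_digit n {k, l} (by simp [hk, hl])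

theorem sum_PmuWord_mul_sum_digit {n : ℕ} {I : Finset ℕ} (hI : ∀ k ∈ I, k ≤ n ∧ n < 2 * k) :
    ∑ u ∈ wordsOfLength n, PmuWord p q u * ∑ k ∈ I, digit u k =
      ∑ k ∈ I, probOneAt p q (padicValNat 2 k) := by
  simp_rw [Finset.mul_sum]
  rw [Finset.sum_comm]
  exact Finset.sum_congr rfl fun k hk => by
    simpa using sum_PmuWord_mul_prod_digit (p := p) (q := q) n {k} (by simpa using hI k hk)

theorem sum_PmuWord_mul_sum_digit_sq {n : ℕ} {I : Finset ℕ} (hI : ∀ k ∈ I, k ≤ n ∧ n < 2 * k) :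
    ∑ u ∈ wordsOfLength n, PmuWord p q u * (∑ k ∈ I, digit u k) ^ 2 =
      (∑ k ∈ I, probOneAt p q (padicValNat 2 k)) ^ 2 +
        ∑ k ∈ I, probOneAt p q (padicValNat 2 k) * (1 - probOneAt p q (padicValNat 2 k)) := by
  set a : ℕ → ℝ := fun k => probOneAt p q (padicValNat 2 k)
  calc ∑ u ∈ wordsOfLength n, PmuWord p q u * (∑ k ∈ I, digit u k) ^ 2
      = ∑ k ∈ I, ∑ l ∈ I, ∑ u ∈ wordsOfLength n, PmuWord p q u * (digit u k * digit u l) := by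
        simp_rw [sq, Finset.sum_mul_sum, Finset.mul_sum]
        rw [Finset.sum_comm]
        exact Finset.sum_congr rfl fun k _ => Finset.sum_comm
    _ = ∑ k ∈ I, ∑ l ∈ I, (a k * a l + if k = l then a k * (1 - a k) else 0) := by
        refine Finset.sum_congr rfl fun k hk => Finset.sum_congr rfl fun l hl => ?_
        rw [sum_PmuWord_mul_digit_mul_digit (hI k hk) (hI l hl)]
        split_ifs with h
        · subst h; ring
        · ring
    _ = (∑ k ∈ I, a k) ^ 2 + ∑ k ∈ I, a k * (1 - a k) := by
        simp_rw [Finset.sum_add_distrib, Finset.sum_ite_eq, ← Finset.mul_sum, ← Finset.sum_mul, sq]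
        rw [Finset.sum_congr rfl fun k hk => if_pos hk]

theorem sum_PmuWord_mul_sum_digit_sub_sq_le {n : ℕ} {I : Finset ℕ}
    (hI : ∀ k ∈ I, k ≤ n ∧ n < 2 * k) :
    ∑ u ∈ wordsOfLength n, PmuWord p q u *
      (∑ k ∈ I, digit u k - ∑ k ∈ I, probOneAt p q (padicValNat 2 k)) ^ 2 ≤ I.card / 4 := by
  set μ := ∑ k ∈ I, probOneAt p q (padicValNat 2 k)
  calc ∑ u ∈ wordsOfLength n, PmuWord p q u * (∑ k ∈ I, digit u k - μ) ^ 2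
      = ∑ u ∈ wordsOfLength n, (PmuWord p q u * (∑ k ∈ I, digit u k) ^ 2
          - 2 * μ * (PmuWord p q u * ∑ k ∈ I, digit u k) + μ ^ 2 * PmuWord p q u) :=
        Finset.sum_congr rfl fun u _ => by ring
    _ = ∑ u ∈ wordsOfLength n, PmuWord p q u * (∑ k ∈ I, digit u k) ^ 2
          - 2 * μ * ∑ u ∈ wordsOfLength n, PmuWord p q u * ∑ k ∈ I, digit u k
          + μ ^ 2 * ∑ u ∈ wordsOfLength n, PmuWord p q u := by
        rw [Finset.sum_add_distrib, Finset.sum_sub_distrib, ← Finset.mul_sum, ← Finset.mul_sum]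
    _ = ∑ k ∈ I, probOneAt p q (padicValNat 2 k) * (1 - probOneAt p q (padicValNat 2 k)) := by
        rw [sum_PmuWord_mul_sum_digit_sq hI, sum_PmuWord_mul_sum_digit hI,
          sum_PmuWord_wordsOfLength]
        ring
    _ ≤ ∑ k ∈ I, (1 / 4 : ℝ) := Finset.sum_le_sum fun k _ => by
        nlinarith [sq_nonneg (probOneAt p q (padicValNat 2 k) - 1 / 2)]
    _ = I.card / 4 := by rw [Finset.sum_const, nsmul_eq_mul]; ring

end WordMoments

/-! ### From words to the measure -/

theorem setOf_word_eq_cylinder (u : List Bool) :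
    {x : Sigma2 | word x u.length = u} = _root_.cylinder u := by
  ext x
  simp only [Set.mem_ofPred_eq, _root_.cylinder, word, List.ext_getElem_iff, List.length_map,
    List.length_range, List.getElem_map, List.getElem_range, true_and]
  exact ⟨fun h i hi => by rw [h i hi hi, List.getD_eq_getElem],
    fun h i hi _ => by rw [h i hi, List.getD_eq_getElem]⟩

theorem measurableSet_cylinder (u : List Bool) : MeasurableSet (_root_.cylinder u) := by
  simp only [_root_.cylinder, Set.ofPred_forall]
  exact .iInter fun i => .iInter fun _ => measurable_pi_apply i (measurableSet_singleton _)

theorem measure_setOf_word {p q : ℝ} {Pm : Measure Sigma2} (hPm : IsPmu p q Pm) (n : ℕ)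
    (P : List Bool → Prop) [DecidablePred P] :
    Pm {x | P (word x n)} = ∑ u ∈ wordsOfLength n with P u, ENNReal.ofReal (PmuWord p q u) := by
  have hlen : ∀ u ∈ (wordsOfLength n).filter P, {x : Sigma2 | word x n = u} = _root_.cylinder u :=
    fun u hu => by
      rw [← mem_wordsOfLength.1 (Finset.mem_filter.1 hu).1, setOf_word_eq_cylinder]
  have hset :
      {x | P (word x n)} = ⋃ u ∈ (wordsOfLength n).filter P, {x : Sigma2 | word x n = u} := by
    ext x
    simp [mem_wordsOfLength, word]
  rw [hset, measure_biUnion_finset (fun u _ v _ huv => Set.disjoint_left.2 fun x hx hy =>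
      huv (hx.symm.trans hy)) fun u hu => hlen u hu ▸ measurableSet_cylinder u]
  exact Finset.sum_congr rfl fun u hu => by rw [hlen u hu, hPm.2]

theorem N1_eq_sum_digit (x : Sigma2) (m n : ℕ) :
    (N1 x (m + 1) n : ℝ) = ∑ k ∈ Finset.Ioc m n, digit (word x n) k := by
  rw [N1, Finset.natCast_card_filter, Finset.Icc_add_one_left_eq_Ioc]
  refine Finset.sum_congr rfl fun k hk => ?_
  rw [Finset.mem_Ioc] at hk
  simp [digit, word, List.getD_eq_getElem?_getD, show k - 1 < n by omega]

theorem N1_add (x : Sigma2) {a b c : ℕ} (hab : a ≤ b) (hbc : b ≤ c) :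
    N1 x (a + 1) c = N1 x (a + 1) b + N1 x (b + 1) c := by
  simp only [N1, Finset.card_filter, Finset.Icc_add_one_left_eq_Ioc]
  exact (Finset.sum_Ioc_consecutive _ hab hbc).symm

theorem N1_add_le (x : Sigma2) {a b : ℕ} (h : a ≤ b) : N1 x (a + 1) b + a ≤ b := by
  have := Finset.card_filter_le (Finset.Icc (a + 1) b) fun k => x (k - 1) = true
  rw [Nat.card_Icc] at this
  unfold N1
  omega

theorem abs_N1_sub_N1_le (x : Sigma2) {m n : ℕ} (h : m ≤ n) :
    |(N1 x (n + 1) (2 * n) : ℝ) - N1 x (m + 1) (2 * m)| ≤ 2 * ((n : ℝ) - m) := by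
  have e1 : (N1 x (m + 1) (2 * n) : ℝ) = N1 x (m + 1) (2 * m) + N1 x (2 * m + 1) (2 * n) := by
    exact_mod_cast N1_add x (show m ≤ 2 * m by omega) (show 2 * m ≤ 2 * n by omega)
  have e2 : (N1 x (m + 1) (2 * n) : ℝ) = N1 x (m + 1) n + N1 x (n + 1) (2 * n) := by
    exact_mod_cast N1_add x h (show n ≤ 2 * n by omega)
  have b1 : (N1 x (2 * m + 1) (2 * n) : ℝ) + 2 * m ≤ 2 * n := by
    exact_mod_cast N1_add_le x (show 2 * m ≤ 2 * n by omega)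
  have b2 : (N1 x (m + 1) n : ℝ) + m ≤ n := by exact_mod_cast N1_add_le x h
  rw [abs_le]
  constructor <;> linarith [(N1 x (2 * m + 1) (2 * n)).cast_nonneg (α := ℝ),
    (N1 x (m + 1) n).cast_nonneg (α := ℝ)]

theorem measure_le_abs_N1_sub_halfMean_div_le {p q : ℝ} (hp : p ∈ Icc (0 : ℝ) 1)
    (hq : q ∈ Icc (0 : ℝ) 1) {Pm : Measure Sigma2} (hPm : IsPmu p q Pm) (m : ℕ) {ε : ℝ}
    (hε : 0 < ε) :
    Pm {x | ε ≤ |((N1 x (m + 1) (2 * m) : ℝ) - halfMean p q m) / m|} ≤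
      ENNReal.ofReal (1 / (4 * ε ^ 2 * m)) := by
  rcases m.eq_zero_or_pos with rfl | hm
  · simp [hε.not_ge]
  have hm' : (0 : ℝ) < m := by exact_mod_cast hm
  have hset : {x | ε ≤ |((N1 x (m + 1) (2 * m) : ℝ) - halfMean p q m) / m|} =
      {x | ε * m ≤ |∑ k ∈ Finset.Ioc m (2 * m), digit (word x (2 * m)) k - halfMean p q m|} := by
    ext x
    rw [Set.mem_ofPred_eq, Set.mem_ofPred_eq, N1_eq_sum_digit, abs_div, Nat.abs_cast,
      le_div_iff₀ hm']
  rw [hset, measure_setOf_word hPm (2 * m)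
      (fun u => ε * m ≤ |∑ k ∈ Finset.Ioc m (2 * m), digit u k - halfMean p q m|),
    ← ENNReal.ofReal_sum_of_nonneg fun u _ => PmuWord_nonneg hp hq u]
  refine ENNReal.ofReal_le_ofReal ((sum_filter_le_sum_mul_sq_div _
    (fun u _ => PmuWord_nonneg hp hq u) (by positivity)).trans ?_)
  calc (∑ u ∈ wordsOfLength (2 * m), PmuWord p q u *
        (∑ k ∈ Finset.Ioc m (2 * m), digit u k - halfMean p q m) ^ 2) / (ε * m) ^ 2
      ≤ (m / 4) / (ε * m) ^ 2 := by
        gcongr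
        refine (sum_PmuWord_mul_sum_digit_sub_sq_le (I := Finset.Ioc m (2 * m)) fun k hk => by
          rw [Finset.mem_Ioc] at hk; omega).trans_eq ?_
        rw [Nat.card_Ioc, show 2 * m - m = m by omega]
    _ = 1 / (4 * ε ^ 2 * m) := by field_simp

/-- Lemma 3.2: for `p ∈ (0,1)`, `q ∈ [0,1]`, for `ℙ_μ`-a.e. `x ∈ Σ₂`, the frequencies
`α_n(x) = N_1(x_{n/2+1}^n)/(n/2)` (over even `n = 2m`) converge to `2p/(1+p+q)`. -/
theorem alpha_tendsto (p q : ℝ) (hp : p ∈ Set.Ioo (0 : ℝ) 1) (hq : q ∈ Set.Icc (0 : ℝ) 1)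
    (Pm : Measure Sigma2) (hPm : IsPmu p q Pm) :
    ∀ᵐ x ∂Pm, Tendsto (fun m : ℕ => (N1 x (m + 1) (2 * m) : ℝ) / (m : ℝ)) atTop
      (nhds (2 * p / (1 + p + q))) := by
  have hdev : ∀ᵐ x ∂Pm, Tendsto (fun j : ℕ =>
      ((N1 x (j ^ 2 + 1) (2 * j ^ 2) : ℝ) - halfMean p q (j ^ 2)) / (j ^ 2 : ℕ)) atTop (𝓝 0) := by
    refine ae_tendsto_zero_of_tsum_measure_ne_top fun ε hε => ne_top_of_le_ne_top ?_
      (ENNReal.tsum_le_tsum fun j =>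
        measure_le_abs_N1_sub_halfMean_div_le (Ioo_subset_Icc_self hp) hq hPm (j ^ 2) hε)
    rw [← ENNReal.ofReal_tsum_of_nonneg (fun j => by positivity) (summable_one_div_mul_sq _)]
    exact ENNReal.ofReal_ne_top
  have hmean := (tendsto_halfMean_div (Ioo_subset_Ioc_self hp) hq).comp
    (tendsto_pow_atTop two_ne_zero)
  filter_upwards [hdev] with x hx
  refine tendsto_div_of_tendsto_div_sq (C := 2) (fun m n h => abs_N1_sub_N1_le x h) ?_
  simpa [sub_div] using hx.add hmean
end
end

section
/- Let p, q ∈ (0,1) satisfy p²q = (1−p)³ and θ = 2p(1−q)/(1+p+q). Then ((1−q)(1−p))/(q·p) < 1 if and only if θ < 1/4. -/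
/-! On the curve `p²q = (1-p)³` the point `p = 1/2` forces `q = 1/2`, and both conditions
reduce to `p < 1/2`: multiplied by `p²`, the gaps `p + q - 1` and `1 + p + q - 8p(1-q)`
become `(1-p)(1-2p)` and `(4p³ - 6p² + 7p + 1)(1-2p)`, with positive cofactors of `1 - 2p`. -/

open Filter MeasureTheory Real Set

noncomputable section

lemma pos_iff_pos_of_mul_eq_mul {a b x y : ℝ} (ha : 0 < a) (hb : 0 < b) (h : a * x = b * y) :
    0 < x ↔ 0 < y := by
  rw [← mul_pos_iff_of_pos_left ha, h, mul_pos_iff_of_pos_left hb]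

lemma cubic_pos {p : ℝ} (hp : 0 ≤ p) : 0 < 4 * p ^ 3 - 6 * p ^ 2 + 7 * p + 1 := by
  nlinarith [mul_nonneg hp (sq_nonneg (2 * p - 3 / 2))]

lemma one_lt_add_iff_lt_half {p q : ℝ} (hp : p ∈ Ioo 0 1) (hpq : p ^ 2 * q = (1 - p) ^ 3) :
    1 < p + q ↔ p < 1 / 2 := by
  have key : p ^ 2 * (p + q - 1) = (1 - p) * (1 - 2 * p) := by linear_combination hpq
  rw [← sub_pos, pos_iff_pos_of_mul_eq_mul (pow_pos hp.1 2) (sub_pos.2 hp.2) key]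
  constructor <;> intro <;> linarith

lemma eight_mul_lt_iff_lt_half {p q : ℝ} (hp : p ∈ Ioo 0 1) (hpq : p ^ 2 * q = (1 - p) ^ 3) :
    8 * p * (1 - q) < 1 + p + q ↔ p < 1 / 2 := by
  have key : p ^ 2 * (1 + p + q - 8 * p * (1 - q)) =
      (4 * p ^ 3 - 6 * p ^ 2 + 7 * p + 1) * (1 - 2 * p) := by
    linear_combination (1 + 8 * p) * hpq
  rw [← sub_pos, pos_iff_pos_of_mul_eq_mul (pow_pos hp.1 2) (cubic_pos hp.1.le) key]
  constructor <;> intro <;> linarith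

/-- Under `p²q = (1-p)³` and `θ = 2p(1-q)/(1+p+q)` with `p, q ∈ (0,1)`:
`((1-q)(1-p))/(qp) < 1` if and only if `θ < 1/4`. -/
theorem ratio_lt_one_iff (p q θ : ℝ) (hp : p ∈ Set.Ioo (0 : ℝ) 1) (hq : q ∈ Set.Ioo (0 : ℝ) 1)
    (hpq : p ^ 2 * q = (1 - p) ^ 3) (hth : θ = 2 * p * (1 - q) / (1 + p + q)) :
    (1 - q) * (1 - p) / (q * p) < 1 ↔ θ < 1 / 4 := by
  have ratio_iff : (1 - q) * (1 - p) / (q * p) < 1 ↔ 1 < p + q := by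
    rw [div_lt_one (mul_pos hq.1 hp.1)]
    constructor <;> intro <;> linarith
  have theta_iff : θ < 1 / 4 ↔ 8 * p * (1 - q) < 1 + p + q := by
    rw [hth, div_lt_iff₀ (by linarith [hp.1, hq.1])]
    constructor <;> intro <;> linarith
  rw [ratio_iff, theta_iff, one_lt_add_iff_lt_half hp hpq, eight_mul_lt_iff_lt_half hp hpq]
end
end
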